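/- arXiv:2105.10586 — 6 statements merged into one kernel-verified Lean document; each statement's English description precedes it below -/
import Mathlib

section
/- With T* and TD* as defined, TD*(k+c) ≥ T*(k) for all integers k ≥ n and c ≥ 2; moreover TD*(n+1) ≥ T*(n). -/
/-- Total cost of consecutive steps of a finite sequence of vertices. -/
def chainCost {V : Type*} (c : V → V → ℝ) : List V → ℝ
  | [] => 0
  | [_] => 0
  | x :: y :: t => c x y + chainCost c (y :: t)

/-- A depot-free spanning revisit sequence with `v` visits, written as a list
`(u_0, ..., u_{v-1}, u_0)`: length `v+1`, cyclically closed, consecutive elements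
distinct, all elements targets, covering all targets. -/
def IsRevSeqND {V : Type*} (N : Finset V) (v : ℕ) (l : List V) : Prop :=
  l.length = v + 1 ∧ l.head? = l.getLast? ∧ l.Chain' (· ≠ ·) ∧
    (∀ x ∈ l, x ∈ N) ∧ (∀ t ∈ N, t ∈ l)

/-- A depot-containing spanning revisit sequence with `v` visits, written as a list
`(u_0, ..., u_{v-1}, u_0)`: starts and ends at the same target, consecutive elements
distinct, elements in `N ∪ {d}`, covering all targets, depot appearing exactly once. -/
def IsRevSeqD {V : Type*} [DecidableEq V] (N : Finset V) (d : V) (v : ℕ) (l : List V) : Prop :=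
  l.length = v + 1 ∧ l.head? = l.getLast? ∧ l.Chain' (· ≠ ·) ∧
    (∀ x ∈ l, x ∈ N ∨ x = d) ∧ (∀ t ∈ N, t ∈ l) ∧ l.count d = 1 ∧
    (∃ u ∈ N, l.head? = some u)

/-!
Deleting the depot from a depot tour costs nothing by the triangle inequality; when both
neighbours of the depot are the same target, that target is then visited twice in a row and one
copy is dropped as well, which costs nothing since costs are nonnegative. The result is a
depot-free tour with one or two visits fewer, hence with at least `N.card` visits.

It remains to see that `T*` is monotone: a depot-free tour with more visits than targets can be
shortened by one visit at no extra cost. Some entry away from the start is repeated. If every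
repeated interior entry had equal neighbours, the repetition would propagate in both directions
along the tour and force it to alternate between two targets, contradicting `3 ≤ N.card`. So
some repeated interior entry has distinct neighbours, and the triangle inequality lets us skip it.
-/

section

open List

variable {α : Type*}

section Periodic

variable {f : ℕ → α} {n : ℕ}

theorem apply_eq_apply_add_two_of_propagate {P : α → Prop}
    (hP : ∀ i j, i < j → j < n → f i = f j → P (f i))
    (hstep : ∀ j, j + 2 < n → P (f (j + 1)) → f j = f (j + 2))
    {j₀ : ℕ} (hj₀ : j₀ + 2 < n) (h₀ : P (f (j₀ + 1))) :
    ∀ j, j + 2 < n → f j = f (j + 2) := by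
  have up : ∀ j, j₀ ≤ j → j + 2 < n → f j = f (j + 2) := by
    intro j hj
    induction j, hj using Nat.le_induction with
    | base => exact fun _ => hstep j₀ hj₀ h₀
    | succ j _ ih =>
      intro hj
      have he := ih (by omega)
      exact hstep (j + 1) hj (he ▸ hP j (j + 2) (by omega) (by omega) he)
  have down : ∀ j ≤ j₀, f j = f (j + 2) := by
    intro j hj
    induction hj using Nat.decreasingInduction with
    | self => exact up j₀ le_rfl hj₀
    | of_succ k hk ih => exact hstep k (by omega) (hP (k + 1) (k + 3) (by omega) (by omega) ih)
  intro j hj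
  rcases le_total j j₀ with h | h
  exacts [down j h, up j h hj]

theorem apply_eq_apply_zero_or_apply_one (h : ∀ j, j + 2 < n → f j = f (j + 2)) :
    ∀ i, i < n → f i = f 0 ∨ f i = f 1
  | 0, _ => .inl rfl
  | 1, _ => .inr rfl
  | i + 2, hi => h i hi ▸ apply_eq_apply_zero_or_apply_one h i (by omega)

end Periodic

namespace List

theorem duplicate_append_cons_iff {x : α} {l₁ l₂ : List α} :
    (l₁ ++ x :: l₂).Duplicate x ↔ x ∈ l₁ ++ l₂ := by
  classical
  rw [duplicate_iff_two_le_count, ← count_pos_iff, count_append, count_append, count_cons_self]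
  omega

theorem duplicate_getD_of_getD_eq (l : List α) (z : α) {i j : ℕ} (hij : i < j)
    (hj : j < l.length) (he : l.getD i z = l.getD j z) : l.Duplicate (l.getD i z) :=
  duplicate_iff_exists_distinct_get.2 ⟨⟨i, hij.trans hj⟩, ⟨j, hj⟩, hij,
    by rw [getD_eq_getElem _ _ (hij.trans hj)]; rfl, by rw [he, getD_eq_getElem _ _ hj]; rfl⟩

theorem eq_take_append_getD_cons (l : List α) (z : α) {j : ℕ} (h : j + 2 < l.length) :
    l = l.take j ++ l.getD j z :: l.getD (j + 1) z :: l.getD (j + 2) z :: l.drop (j + 3) := by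
  rw [getD_eq_getElem _ _ (by omega), getD_eq_getElem _ _ (by omega), getD_eq_getElem _ _ h,
    ← drop_eq_getElem_cons, ← drop_eq_getElem_cons, ← drop_eq_getElem_cons, take_append_drop]

theorem exists_duplicate_getD_succ [DecidableEq α] {l : List α}
    (hlen : l.toFinset.card + 1 < l.length) (z : α) :
    ∃ j, j + 2 < l.length ∧ l.Duplicate (l.getD (j + 1) z) := by
  have hnd : ¬ l.tail.Nodup := fun hnd => by
    have htail : l.tail.toFinset.card ≤ l.toFinset.card :=
      Finset.card_le_card fun x hx => mem_toFinset.2 (mem_of_mem_tail (mem_toFinset.1 hx))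
    rw [toFinset_card_of_nodup hnd, length_tail] at htail
    omega
  obtain ⟨x, hx⟩ := exists_duplicate_iff_not_nodup.2 hnd
  obtain ⟨⟨i, hi⟩, ⟨j, hj⟩, hij, rfl, -⟩ := duplicate_iff_exists_distinct_get.1 hx
  have hij : i < j := hij
  rw [length_tail] at hj
  refine ⟨i, by omega, ?_⟩
  rw [getD_eq_getElem _ _ (by omega), ← getElem_tail]
  exact hx.mono_sublist (tail_sublist l)

theorem exists_shortcut [DecidableEq α] {l : List α} (hlen : l.toFinset.card + 1 < l.length)
    (hcard : 2 < l.toFinset.card) :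
    ∃ p a x b q, l = p ++ a :: x :: b :: q ∧ a ≠ b ∧ x ∈ p ++ a :: b :: q := by
  obtain ⟨z, -⟩ := Finset.card_pos.1 (show 0 < l.toFinset.card by omega)
  by_contra! hnot
  have hstep : ∀ j, j + 2 < l.length → l.Duplicate (l.getD (j + 1) z) →
      l.getD j z = l.getD (j + 2) z := by
    intro j hj hdup
    by_contra hne
    have hsplit := l.eq_take_append_getD_cons z hj
    set x := l.getD (j + 1) z
    rw [hsplit, ← singleton_append, ← append_assoc, duplicate_append_cons_iff] at hdup
    exact hnot _ _ _ _ _ hsplit hne (by simpa using hdup)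
  obtain ⟨j₀, hj₀, h₀⟩ := exists_duplicate_getD_succ hlen z
  have hper := apply_eq_apply_add_two_of_propagate (f := fun i => l.getD i z) (P := l.Duplicate)
    (fun _ _ => l.duplicate_getD_of_getD_eq z) hstep hj₀ h₀
  have hsub : l.toFinset ⊆ {l.getD 0 z, l.getD 1 z} := by
    intro y hy
    obtain ⟨i, hi, rfl⟩ := getElem_of_mem (mem_toFinset.1 hy)
    have := apply_eq_apply_zero_or_apply_one hper i hi
    rw [getD_eq_getElem _ _ hi] at this
    simpa using this
  have := (Finset.card_le_card hsub).trans Finset.card_le_two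
  omega

end List

section Cost

variable (c : α → α → ℝ)

theorem chainCost_append_cons :
    ∀ (p : List α) (y : α) (ys : List α),
      chainCost c (p ++ y :: ys) = chainCost c (p ++ [y]) + chainCost c (y :: ys)
  | [], _, _ => by simp [chainCost]
  | [_], _, _ => by simp [chainCost]
  | a :: b :: p, y, ys => by
    change c a b + chainCost c (b :: p ++ y :: ys) = c a b + chainCost c (b :: p ++ [y]) + _
    rw [chainCost_append_cons (b :: p) y ys]
    ring

variable {c}

theorem chainCost_shortcut_le {a x b : α} (h : c a b ≤ c a x + c x b) (p q : List α) :
    chainCost c (p ++ a :: b :: q) ≤ chainCost c (p ++ a :: x :: b :: q) := by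
  rw [chainCost_append_cons c p a (b :: q), chainCost_append_cons c p a (x :: b :: q)]
  simp only [chainCost]
  linarith

theorem chainCost_backtrack_le {a x : α} (h : 0 ≤ c a x + c x a) (p q : List α) :
    chainCost c (p ++ a :: q) ≤ chainCost c (p ++ a :: x :: a :: q) := by
  rw [chainCost_append_cons c p a q, chainCost_append_cons c p a (x :: a :: q)]
  simp only [chainCost]
  linarith

end Cost

section Chain

variable {R : α → α → Prop} {p q : List α} {a x b : α}

theorem List.IsChain.shortcut (h : IsChain R (p ++ a :: x :: b :: q)) (hab : R a b) :
    IsChain R (p ++ a :: b :: q) := by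
  simp only [isChain_append_cons_cons, isChain_cons_cons] at h ⊢
  tauto

theorem List.IsChain.backtrack (h : IsChain R (p ++ a :: x :: a :: q)) :
    IsChain R (p ++ a :: q) := by
  simp only [isChain_append_cons_cons] at h
  simpa using h.1.append_overlap (l₂ := [a]) (h.2.2.tail) (cons_ne_nil a [])

end Chain

section RevSeq

variable {N : Finset α} {v : ℕ} {l p q : List α} {a x b : α}

theorem IsRevSeqND.card_le [DecidableEq α] (hN : 2 ≤ N.card) (h : IsRevSeqND N v l) :
    N.card ≤ v := by
  obtain ⟨hlen, hclosed, -, -, hcov⟩ := h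
  rcases l with _ | ⟨w, t⟩
  · simp at hlen
  rcases eq_nil_or_concat' t with rfl | ⟨s, y, rfl⟩
  · have := (Finset.card_le_card (show N ⊆ {w} from fun u hu => by simpa using hcov u hu))
      |>.trans_eq (Finset.card_singleton w)
    omega
  · obtain rfl : w = y := by simpa [getLast?_cons] using hclosed
    have hsub : N ⊆ (s ++ [w]).toFinset := fun u hu =>
      mem_toFinset.2 (cons_subset.2 ⟨mem_concat_self, Subset.refl _⟩ (hcov u hu))
    have := (Finset.card_le_card hsub).trans (toFinset_card_le _)
    rw [length_cons] at hlen
    omega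

theorem IsRevSeqND.shortcut (h : IsRevSeqND N (v + 1) (p ++ a :: x :: b :: q)) (hab : a ≠ b)
    (hx : x ∈ p ++ a :: b :: q) : IsRevSeqND N v (p ++ a :: b :: q) := by
  obtain ⟨hlen, hclosed, hchain, hmem, hcov⟩ := h
  refine ⟨by simp only [length_append, length_cons] at hlen ⊢; omega, by simpa using hclosed,
    IsChain.shortcut hchain hab,
    fun y hy => hmem y (by simp only [mem_append, mem_cons] at hy ⊢; tauto), fun t ht => ?_⟩
  rcases eq_or_ne t x with rfl | htx
  · exact hx
  · simpa [htx] using hcov t ht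

theorem IsRevSeqND.exists_pred_cost_le [DecidableEq α] {c : α → α → ℝ}
    (htri : ∀ x y z, c x z ≤ c x y + c y z) (hN : 3 ≤ N.card) (hv : N.card ≤ v)
    (h : IsRevSeqND N (v + 1) l) :
    ∃ l', IsRevSeqND N v l' ∧ chainCost c l' ≤ chainCost c l := by
  have hsub := Finset.card_le_card fun y hy => h.2.2.2.1 y (mem_toFinset.1 hy)
  have hsup := Finset.card_le_card fun t ht => mem_toFinset.2 (h.2.2.2.2 t ht)
  obtain ⟨p, a, x, b, q, rfl, hab, hx⟩ :=
    exists_shortcut (l := l) (by have := h.1; omega) (by omega)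
  exact ⟨_, h.shortcut hab hx, chainCost_shortcut_le (htri a x b) p q⟩

theorem IsRevSeqND.exists_cost_le_of_le [DecidableEq α] {c : α → α → ℝ}
    (htri : ∀ x y z, c x z ≤ c x y + c y z) (hN : 3 ≤ N.card) {k : ℕ} (hk : N.card ≤ k)
    (hkv : k ≤ v) (h : IsRevSeqND N v l) :
    ∃ l', IsRevSeqND N k l' ∧ chainCost c l' ≤ chainCost c l := by
  induction v, hkv using Nat.le_induction generalizing l with
  | base => exact ⟨l, h, le_rfl⟩
  | succ v hkv ih =>
    obtain ⟨l₁, h₁, hc₁⟩ := h.exists_pred_cost_le htri hN (hk.trans hkv)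
    obtain ⟨l₂, h₂, hc₂⟩ := ih h₁
    exact ⟨l₂, h₂, hc₂.trans hc₁⟩

variable [DecidableEq α] {d : α}

theorem IsRevSeqD.exists_eq_append (hd : d ∉ N) (h : IsRevSeqD N d v l) :
    ∃ p a b q, l = p ++ a :: d :: b :: q := by
  obtain ⟨-, hclosed, -, -, -, hcount, u, hu, hhead⟩ := h
  obtain ⟨s, t, rfl⟩ := append_of_mem (count_pos_iff.1 (by omega) : d ∈ l)
  rcases eq_nil_or_concat' s with rfl | ⟨p, a, rfl⟩
  · obtain rfl : d = u := by simpa using hhead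
    exact absurd hu hd
  rcases t with _ | ⟨b, q⟩
  · obtain rfl : u = d := Option.some.inj (hhead.symm.trans (hclosed.trans (by simp)))
    exact absurd hu hd
  · exact ⟨p, a, b, q, by simp⟩

theorem IsRevSeqD.mem_append_iff {l₁ l₂ : List α} (hd : d ∉ N)
    (h : IsRevSeqD N d v (l₁ ++ d :: l₂)) (y : α) : y ∈ l₁ ++ l₂ ↔ y ∈ N := by
  obtain ⟨-, -, -, hmem, hcov, hcount, -⟩ := h
  constructor
  · intro hy
    refine (hmem y (by simp only [mem_append, mem_cons] at hy ⊢; tauto)).resolve_right ?_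
    rintro rfl
    have := duplicate_iff_two_le_count.1 (duplicate_append_cons_iff.2 hy)
    omega
  · intro hy
    have := hcov y hy
    have hyd : y ≠ d := fun hyd => hd (hyd ▸ hy)
    simp only [mem_append, mem_cons, hyd, false_or] at this ⊢
    tauto

theorem IsRevSeqD.isRevSeqND_shortcut (hd : d ∉ N)
    (h : IsRevSeqD N d (v + 1) (p ++ a :: d :: b :: q)) (hab : a ≠ b) :
    IsRevSeqND N v (p ++ a :: b :: q) := by
  have hmem := IsRevSeqD.mem_append_iff (l₁ := p ++ [a]) (l₂ := b :: q) hd (by simpa using h)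
  obtain ⟨hlen, hclosed, hchain, -⟩ := h
  exact ⟨by simp only [length_append, length_cons] at hlen ⊢; omega, by simpa using hclosed,
    IsChain.shortcut hchain hab,
    fun y hy => (hmem y).1 (by simpa using hy), fun t ht => by simpa using (hmem t).2 ht⟩

theorem IsRevSeqD.isRevSeqND_backtrack (hd : d ∉ N)
    (h : IsRevSeqD N d (v + 2) (p ++ a :: d :: a :: q)) : IsRevSeqND N v (p ++ a :: q) := by
  have hmem := IsRevSeqD.mem_append_iff (l₁ := p ++ [a]) (l₂ := a :: q) hd (by simpa using h)
  obtain ⟨hlen, hclosed, hchain, -⟩ := h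
  exact ⟨by simp only [length_append, length_cons] at hlen ⊢; omega, by simpa using hclosed,
    IsChain.backtrack hchain,
    fun y hy => (hmem y).1 (by simpa using hy), fun t ht => by simpa using (hmem t).2 ht⟩

theorem IsRevSeqD.exists_isRevSeqND_cost_le {c : α → α → ℝ} (hnonneg : ∀ x y, 0 ≤ c x y)
    (htri : ∀ x y z, c x z ≤ c x y + c y z) (hd : d ∉ N) (h : IsRevSeqD N d v l) :
    ∃ m l', m < v ∧ v ≤ m + 2 ∧ IsRevSeqND N m l' ∧ chainCost c l' ≤ chainCost c l := by
  obtain ⟨p, a, b, q, rfl⟩ := h.exists_eq_append hd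
  obtain ⟨m, rfl⟩ : ∃ m, v = m + 2 := by
    have := h.1
    simp only [length_append, length_cons] at this
    exact ⟨v - 2, by omega⟩
  by_cases hab : a = b
  · subst hab
    exact ⟨m, _, by omega, le_rfl, h.isRevSeqND_backtrack hd,
      chainCost_backtrack_le (add_nonneg (hnonneg a d) (hnonneg d a)) p q⟩
  · exact ⟨m + 1, _, by omega, by omega, h.isRevSeqND_shortcut hd hab,
      chainCost_shortcut_le (htri a d b) p q⟩

end RevSeq

end

theorem TDstar_ge_Tstar_general {V : Type*} [DecidableEq V]
    (c : V → V → ℝ) (N : Finset V) (d : V) (hd : d ∉ N) (hn : 3 ≤ N.card)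
    (hnonneg : ∀ x y, 0 ≤ c x y)
    (htri : ∀ x y z, c x z ≤ c x y + c y z)
    (T TD : ℕ → ℝ)
    (hT : ∀ v, N.card ≤ v →
      IsLeast {x | ∃ l, IsRevSeqND N v l ∧ chainCost c l = x} (T v))
    (hTD : ∀ v, N.card + 1 ≤ v →
      IsLeast {x | ∃ l, IsRevSeqD N d v l ∧ chainCost c l = x} (TD v)) :
    (∀ k c', N.card ≤ k → 2 ≤ c' → T k ≤ TD (k + c')) ∧
      T N.card ≤ TD (N.card + 1) := by
  have key : ∀ k v, N.card ≤ k → N.card + 1 ≤ v → k + 2 ≤ v ∨ k = N.card →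
      T k ≤ TD v := by
    intro k v hk hv hkv
    obtain ⟨⟨l, hl, hcost⟩, -⟩ := hTD v hv
    obtain ⟨m, l₁, hmv, hvm, h₁, hc₁⟩ := hl.exists_isRevSeqND_cost_le hnonneg htri hd
    have hkm : k ≤ m := by have := h₁.card_le (by omega); omega
    obtain ⟨l₂, h₂, hc₂⟩ := h₁.exists_cost_le_of_le htri hn hk hkm
    exact hcost ▸ ((hT k hk).2 ⟨l₂, h₂, rfl⟩).trans (hc₂.trans hc₁)
  exact ⟨fun k c' hk hc' => key k (k + c') hk (by omega) (.inl (by omega)),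
    key _ _ le_rfl le_rfl (.inr rfl)⟩

/-- `TD*(k+c) ≥ T*(k)` for all `k ≥ n` and `c ≥ 2`; moreover
`TD*(n+1) ≥ T*(n)`. -/
theorem TDstar_ge_Tstar {V : Type*} [Fintype V] [DecidableEq V]
    (c : V → V → ℝ) (N : Finset V) (d : V) (hd : d ∉ N) (hn : 3 ≤ N.card)
    (hsymm : ∀ x y, c x y = c y x) (hnonneg : ∀ x y, 0 ≤ c x y)
    (htri : ∀ x y z, c x z ≤ c x y + c y z)
    (T TD : ℕ → ℝ)
    (hT : ∀ v, N.card ≤ v →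
      IsLeast {x | ∃ l, IsRevSeqND N v l ∧ chainCost c l = x} (T v))
    (hTD : ∀ v, N.card + 1 ≤ v →
      IsLeast {x | ∃ l, IsRevSeqD N d v l ∧ chainCost c l = x} (TD v)) :
    (∀ k c', N.card ≤ k → 2 ≤ c' → T k ≤ TD (k + c')) ∧
      T N.card ≤ TD (N.card + 1) :=
  TDstar_ge_Tstar_general c N d hd hn hnonneg htri T TD hT hTD
end

section
/- For a PMP walk W with v visits, where n ≤ v ≤ 2n−1, the revisit time of W equals the travel time of W, i.e., the maximum over all spanning revisit sequences obtainable from repeating W of their travel time equals the total cost of one traversal of W. -/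
/-- Cost of the stretch of the (periodically extended) walk `f` from index `i` to `j`. -/
noncomputable def segCost {V : Type*} (c : V → V → ℝ) (f : ℕ → V) (i j : ℕ) : ℝ :=
  ∑ m ∈ Finset.range (j - i), c (f (i + m)) (f (i + m + 1))

/-- Indices `i < j` are consecutive occurrences of the terminus `f i` in the walk `f`. -/
def IsRevisit {V : Type*} (f : ℕ → V) (i j : ℕ) : Prop :=
  i < j ∧ f j = f i ∧ ∀ m, i < m → m < j → f m ≠ f i

/-- The stretch of `f` from `i` to `j` visits every target in `N`. -/
def Spans {V : Type*} (N : Finset V) (f : ℕ → V) (i j : ℕ) : Prop :=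
  ∀ t ∈ N, ∃ m, i ≤ m ∧ m ≤ j ∧ f m = t

/-- The stretch of `f` from `i` to `j` visits the depot. -/
def HasDepot {V : Type*} (dV : V) (f : ℕ → V) (i j : ℕ) : Prop :=
  ∃ m, i ≤ m ∧ m ≤ j ∧ f m = dV

/-- The set of travel times of all spanning revisit sequences (with a target terminus,
starting within one period `p`) of the periodic walk `f`. The revisit time of the walk
is the greatest element of this set. -/
def revCosts {V : Type*} (c : V → V → ℝ) (N : Finset V) (p : ℕ) (f : ℕ → V) : Set ℝ :=
  {x | ∃ i j, i < p ∧ f i ∈ N ∧ IsRevisit f i j ∧ Spans N f i j ∧ x = segCost c f i j}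

/-- A PMP walk with `v` visits, modelled as its periodic extension: period `v`,
consecutive visits distinct, all visits are targets, every target visited in a period. -/
def IsPMPWalkFun {V : Type*} (N : Finset V) (v : ℕ) (f : ℕ → V) : Prop :=
  (∀ i, f (i + v) = f i) ∧ (∀ i, f i ≠ f (i + 1)) ∧
    (∀ i, f i ∈ N) ∧ (∀ t ∈ N, ∃ i, i < v ∧ f i = t)

/-- A PMP-D walk with `k` visits, modelled as its periodic extension: period `k`,
starts at the depot, the depot is visited exactly once per period, consecutive visits
distinct, visits in `N ∪ {d}`, every target visited in a period. -/
def IsPMPDWalkFun {V : Type*} (N : Finset V) (dV : V) (k : ℕ) (f : ℕ → V) : Prop :=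
  (∀ i, f (i + k) = f i) ∧ (∀ i, f i ≠ f (i + 1)) ∧
    (∀ i, f i = dV ↔ k ∣ i) ∧ (∀ i, f i ∈ N ∨ f i = dV) ∧
    (∀ t ∈ N, ∃ i, i < k ∧ f i = t)

/-- The set of revisit times of PMP-D walks with `m` visits; `RD*(m)` is its least element. -/
def pmpdRevTimes {V : Type*} (c : V → V → ℝ) (N : Finset V) (dV : V) (m : ℕ) : Set ℝ :=
  {r | ∃ f : ℕ → V, IsPMPDWalkFun N dV m f ∧ IsGreatest (revCosts c N m f) r}

/-- The set of revisit times of PMP walks with `m` visits; `R*(m)` is its least element. -/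
def pmpRevTimes {V : Type*} (c : V → V → ℝ) (N : Finset V) (m : ℕ) : Set ℝ :=
  {r | ∃ f : ℕ → V, IsPMPWalkFun N m f ∧ IsGreatest (revCosts c N m f) r}

lemma shiftSum {g : ℕ → ℝ} {v : ℕ} (hg : ∀ m, g (m + v) = g m) (i : ℕ) :
    ∑ m ∈ Finset.range v, g (i + m) = ∑ m ∈ Finset.range v, g m := by
  induction i with
  | zero => simp
  | succ i ih =>
    rw [← ih]
    rcases Nat.eq_zero_or_pos v with h | h
    · simp [h]
    obtain ⟨k, rfl⟩ : ∃ k, v = k + 1 := ⟨v - 1, by omega⟩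
    rw [Finset.sum_range_succ, Finset.sum_range_succ']
    congr 1
    · exact Finset.sum_congr rfl fun m _ => by rw [show i+1+m = i+(m+1) by omega]
    · rw [show i+1+k = i+(k+1) by omega, hg i, show i + 0 = i by omega]

/-- for a PMP walk `W` with `n ≤ v ≤ 2n−1` visits, the revisit time of `W`
equals its travel time: the travel time of one period is the greatest element of the set
of travel times of spanning revisit sequences of the repeated walk. -/
theorem revisit_time_eq_travel_time {V : Type*} [Fintype V]
    (c : V → V → ℝ) (N : Finset V) (hn : 3 ≤ N.card)
    (hsymm : ∀ x y, c x y = c y x) (hnonneg : ∀ x y, 0 ≤ c x y)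
    (htri : ∀ x y z, c x z ≤ c x y + c y z)
    (v : ℕ) (hv1 : N.card ≤ v) (hv2 : v ≤ 2 * N.card - 1)
    (f : ℕ → V) (hf : IsPMPWalkFun N v f) :
    IsGreatest (revCosts c N v f) (segCost c f 0 v) := by
  classical
  obtain ⟨hper, hne, hmem, hcov⟩ := hf
  have hv0 : 0 < v := by omega
  -- the step-cost function is periodic
  set g : ℕ → ℝ := fun m => c (f m) (f (m + 1)) with hg
  have hgper : ∀ m, g (m + v) = g m := by
    intro m
    simp only [hg]
    rw [show m + v + 1 = (m + 1) + v by omega, hper, hper]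
  have hseg0 : segCost c f 0 v = ∑ m ∈ Finset.range v, g m := by
    simp [segCost, hg]
  have hsegshift : ∀ i, segCost c f i (i + v) = segCost c f 0 v := by
    intro i
    rw [hseg0]
    rw [show segCost c f i (i + v) = ∑ m ∈ Finset.range v, g (i + m) by
      simp [segCost, hg]]
    exact shiftSum hgper i
  -- pigeonhole: some target visited exactly once per period
  have hsum : (Finset.range v).card = ∑ t ∈ N, ((Finset.range v).filter (fun i => f i = t)).card :=
    Finset.card_eq_sum_card_fiberwise (fun i _ => hmem i)
  have h1 : ∀ t ∈ N, 1 ≤ ((Finset.range v).filter (fun i => f i = t)).card := by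
    intro t ht
    obtain ⟨i, hiv, hit⟩ := hcov t ht
    exact Finset.card_pos.2 ⟨i, Finset.mem_filter.2 ⟨Finset.mem_range.2 hiv, hit⟩⟩
  have hex : ∃ t ∈ N, ((Finset.range v).filter (fun i => f i = t)).card = 1 := by
    by_contra hcon
    push_neg at hcon
    have h2 : ∀ t ∈ N, 2 ≤ ((Finset.range v).filter (fun i => f i = t)).card := by
      intro t ht
      have := h1 t ht
      have := hcon t ht
      omega
    have : 2 * N.card ≤ ∑ t ∈ N, ((Finset.range v).filter (fun i => f i = t)).card := by
      calc 2 * N.card = ∑ _t ∈ N, 2 := by rw [Finset.sum_const]; ring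
        _ ≤ _ := Finset.sum_le_sum h2
    rw [← hsum, Finset.card_range] at this
    omega
  obtain ⟨t, htN, hone⟩ := hex
  rw [Finset.card_eq_one] at hone
  obtain ⟨a, ha⟩ := hone
  have haF : a ∈ (Finset.range v).filter (fun i => f i = t) := ha ▸ Finset.mem_singleton_self a
  rw [Finset.mem_filter, Finset.mem_range] at haF
  obtain ⟨hav, hat⟩ := haF
  have huniq : ∀ m, m < v → f m = t → m = a := by
    intro m hm hmt
    have : m ∈ (Finset.range v).filter (fun i => f i = t) :=
      Finset.mem_filter.2 ⟨Finset.mem_range.2 hm, hmt⟩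
    rw [ha, Finset.mem_singleton] at this
    exact this
  constructor
  · -- membership
    refine ⟨a, a + v, hav, hat ▸ htN, ⟨by omega, hper a, ?_⟩, ?_, (hsegshift a).symm⟩
    · intro m hm1 hm2 hmf
      rw [hat] at hmf
      rcases lt_or_ge m v with h | h
      · have := huniq m h hmf
        omega
      · have : f (m - v) = t := by
          rw [← hmf, ← hper (m - v), show m - v + v = m by omega]
        have := huniq (m - v) (by omega) this
        omega
    · intro t' ht'
      obtain ⟨i', hi'v, hi't⟩ := hcov t' ht'
      rcases le_or_gt a i' with h | h
      · exact ⟨i', h, by omega, hi't⟩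
      · exact ⟨i' + v, by omega, by omega, by rw [hper]; exact hi't⟩
  · -- upper bound
    rintro x ⟨i, j, hiv, hfiN, ⟨hij, hfj, hmin⟩, hspan, rfl⟩
    have hjle : j ≤ i + v := by
      by_contra hcon
      push_neg at hcon
      exact hmin (i + v) (by omega) hcon (hper i)
    rw [← hsegshift i]
    rw [show segCost c f i j = ∑ m ∈ Finset.range (j - i), g (i + m) by simp [segCost, hg]]
    rw [show segCost c f i (i + v) = ∑ m ∈ Finset.range v, g (i + m) by simp [segCost, hg]]
    apply Finset.sum_le_sum_of_subset_of_nonneg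
    · exact Finset.range_subset_range.2 (by omega)
    · intro m _ _
      exact hnonneg _ _
end

section
/- Every PMP-D walk with k ≥ n+3 visits whose longest depot-containing spanning revisit sequence has exactly n+1 visits contains a spanning revisit sequence that does not include the depot. -/
/-- a PMP-D walk with `k ≥ n+3` visits whose longest depot-containing
spanning revisit sequence has exactly `n+1` visits contains a spanning revisit sequence
avoiding the depot. -/
theorem exists_rsnd_of_vd_eq_n_add_one {V : Type*} [DecidableEq V]
    (c : V → V → ℝ) (N : Finset V) (dV : V) (hd : dV ∉ N) (hn : 3 ≤ N.card)
    (k : ℕ) (hk : N.card + 3 ≤ k)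
    (f : ℕ → V) (hf : IsPMPDWalkFun N dV k f)
    (hmax : ∀ i j, f i ∈ N → IsRevisit f i j → Spans N f i j → HasDepot dV f i j →
      j - i ≤ N.card + 1)
    (hex : ∃ i j, f i ∈ N ∧ IsRevisit f i j ∧ Spans N f i j ∧ HasDepot dV f i j ∧
      j - i = N.card + 1) :
    ∃ i j, f i ∈ N ∧ IsRevisit f i j ∧ Spans N f i j ∧ ¬ HasDepot dV f i j := by
  classical
  obtain ⟨hper, hne, hdep, hNd, hcov⟩ := hf
  obtain ⟨i, j, hiN, hrev, hspan, hdepot, hlen⟩ := hex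
  obtain ⟨hij, hfj, hmin⟩ := hrev
  obtain ⟨m, him, hmj, hfm⟩ := hdepot
  set n := N.card with hnn
  set u := f i with hu
  have hk0 : 0 < k := by omega
  have hnext : ∀ p : ℕ, ∃ q, p < q ∧ f q = f p := fun p => ⟨p + k, by omega, hper p⟩
  have hkm : k ∣ m := (hdep m).mp hfm
  have hudV : u ≠ dV := fun h => hd (h ▸ hiN)
  have hmni : m ≠ i := by
    intro h
    apply hd
    rw [← hfm, h]
    exact hiN
  have hmnj : m ≠ j := by
    intro h
    apply hd
    rw [← hfm, h, hfj]
    exact hiN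
  have him' : i < m := lt_of_le_of_ne him (Ne.symm hmni)
  have hmj' : m < j := lt_of_le_of_ne hmj hmnj
  -- uniqueness of the multiple of k in [i, j]
  have hdvd_uniq : ∀ p, i ≤ p → p ≤ j → k ∣ p → p = m := by
    intro p h1 h2 hp
    obtain ⟨a, rfl⟩ := hp
    obtain ⟨q, hq⟩ := hkm
    rcases lt_trichotomy a q with h | h | h
    · exfalso
      have h3 : k * (a + 1) ≤ k * q := Nat.mul_le_mul_left k (by omega)
      rw [Nat.mul_add, Nat.mul_one] at h3
      omega
    · rw [h]; exact hq.symm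
    · exfalso
      have h3 : k * (q + 1) ≤ k * a := Nat.mul_le_mul_left k (by omega)
      rw [Nat.mul_add, Nat.mul_one] at h3
      omega
  -- the injectivity structure on [i, j-1] \ {m}
  have hmIcc : m ∈ Finset.Icc i (j - 1) := Finset.mem_Icc.mpr ⟨him, by omega⟩
  set D := (Finset.Icc i (j - 1)).erase m with hD
  have hDcard : D.card = n := by
    rw [hD, Finset.card_erase_of_mem hmIcc, Nat.card_Icc]
    omega
  have hDmem : ∀ p ∈ D, f p ∈ N := by
    intro p hp
    rw [hD, Finset.mem_erase, Finset.mem_Icc] at hp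
    rcases hNd p with h | h
    · exact h
    · exact absurd (hdvd_uniq p hp.2.1 (by omega) ((hdep p).mp h)) hp.1
  have hsub1 : D.image f ⊆ N := Finset.image_subset_iff.mpr hDmem
  have hsub2 : N ⊆ D.image f := by
    intro t ht
    obtain ⟨p, h1, h2, h3⟩ := hspan t ht
    by_cases hpj : p = j
    · refine Finset.mem_image.mpr ⟨i, ?_, ?_⟩
      · rw [hD, Finset.mem_erase, Finset.mem_Icc]
        exact ⟨Ne.symm hmni, le_rfl, by omega⟩
      · rw [← hu, ← hfj, ← hpj, h3]
    · refine Finset.mem_image.mpr ⟨p, ?_, h3⟩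
      rw [hD, Finset.mem_erase, Finset.mem_Icc]
      have hpm : p ≠ m := by
        intro h
        apply hd
        rw [← hfm, ← h, h3]
        exact ht
      exact ⟨hpm, h1, by omega⟩
  have himage : D.image f = N := Finset.Subset.antisymm hsub1 hsub2
  have hinj : Set.InjOn f ↑D := by
    apply Finset.card_image_iff.mp
    rw [himage, hDcard, hnn]
  -- unique occurrence in [i, j] of any target other than u
  have huniq : ∀ t, t ∈ N → t ≠ u → ∀ p, i ≤ p → p ≤ j → f p = t →
      ∀ q, i ≤ q → q ≤ j → f q = t → p = q := by
    intro t ht htu p hp1 hp2 hp3 q hq1 hq2 hq3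
    have hmem : ∀ r, i ≤ r → r ≤ j → f r = t → r ∈ D := by
      intro r hr1 hr2 hr3
      rw [hD, Finset.mem_erase, Finset.mem_Icc]
      have hrj : r ≠ j := by
        intro h
        exact htu (by rw [← hr3, h, hfj])
      have hrm : r ≠ m := by
        intro h
        apply hd
        rw [← hfm, ← h, hr3]
        exact ht
      exact ⟨hrm, hr1, by omega⟩
    exact hinj (Finset.mem_coe.mpr (hmem p hp1 hp2 hp3))
      (Finset.mem_coe.mpr (hmem q hq1 hq2 hq3)) (hp3.trans hq3.symm)
  -- first return of u after j
  have hbspec : j < Nat.find (hnext j) ∧ f (Nat.find (hnext j)) = f j :=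
    Nat.find_spec (hnext j)
  set b := Nat.find (hnext j) with hbdef
  have hjb : j < b := hbspec.1
  have hfbu : f b = u := by rw [hbspec.2, hfj]
  have hble : b ≤ i + k := Nat.find_min' (hnext j) ⟨by omega, by rw [hfj, hper i, hu]⟩
  have hbmin : ∀ p, j < p → p < b → f p ≠ u := by
    intro p h1 h2 hp
    exact Nat.find_min (hnext j) h2 ⟨h1, by rw [hp, hfj]⟩
  have hnodep : ¬ HasDepot dV f j b := by
    intro h
    obtain ⟨p, hp1, hp2, hp3⟩ := h
    have hkp : k ∣ p := (hdep p).mp hp3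
    obtain ⟨a, rfl⟩ := hkp
    obtain ⟨q, hq⟩ := hkm
    have h1 : q < a := Nat.lt_of_mul_lt_mul_left (show k * q < k * a by omega)
    have h2 : a < q + 1 := by
      apply Nat.lt_of_mul_lt_mul_left (a := k)
      rw [Nat.mul_add, Nat.mul_one]
      omega
    omega
  -- main descent lemma
  have main : ∀ ms, ∀ s cs, s ∈ N → s ≠ u → f ms = s → f cs = s →
      i < ms → ms < j → b < cs → (∀ p, ms < p → p < cs → f p ≠ s) →
      ∃ i' j', f i' ∈ N ∧ IsRevisit f i' j' ∧ Spans N f i' j' ∧ ¬ HasDepot dV f i' j' := by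
    intro ms
    induction ms using Nat.strong_induction_on with
    | _ ms IH =>
      intro s cs hsN hsu hfms hfcs hims hmsj hbcs hminimal
      have hrevms : IsRevisit f ms cs := by
        refine ⟨by omega, by rw [hfcs, hfms], ?_⟩
        intro p h1 h2
        rw [hfms]
        exact hminimal p h1 h2
      by_cases hsp : Spans N f ms cs
      · by_cases hdp : HasDepot dV f ms cs
        · exfalso
          obtain ⟨pd, hpd1, hpd2, hpd3⟩ := hdp
          have hle := hmax ms cs (by rw [hfms]; exact hsN) hrevms hsp
            ⟨pd, hpd1, hpd2, hpd3⟩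
          -- counting argument
          have hsdV : s ≠ dV := fun h => hd (h ▸ hsN)
          set pick : V → ℕ :=
            fun t => if h : ∃ p, ms ≤ p ∧ p ≤ cs ∧ f p = t then h.choose else 0 with hpick
          have hpickP : ∀ t ∈ N, ms ≤ pick t ∧ pick t ≤ cs ∧ f (pick t) = t := by
            intro t ht
            have h := hsp t ht
            rw [hpick]
            simp only [dif_pos h]
            exact h.choose_spec
          set T := (N.erase u).erase s with hT
          have hTmem : ∀ t ∈ T, t ≠ s ∧ t ≠ u ∧ t ∈ N := by
            intro t ht
            rw [hT, Finset.mem_erase, Finset.mem_erase] at ht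
            exact ⟨ht.1, ht.2.1, ht.2.2⟩
          have hTcard : T.card = n - 2 := by
            rw [hT, Finset.card_erase_of_mem (Finset.mem_erase.mpr ⟨hsu, hsN⟩),
              Finset.card_erase_of_mem hiN]
            omega
          have hcardim : (T.image pick).card = n - 2 := by
            rw [Finset.card_image_of_injOn, hTcard]
            intro t1 h1 t2 h2 hEq
            have q1 := (hpickP t1 (hTmem t1 h1).2.2).2.2
            have q2 := (hpickP t2 (hTmem t2 h2).2.2).2.2
            rw [← q1, ← q2, hEq]
          have hpdms : pd ≠ ms := fun h => hsdV (by rw [← hfms, ← h, hpd3])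
          have hpdj : pd ≠ j := fun h => hudV (by rw [← hfj, ← h, hpd3])
          have hpdb : pd ≠ b := fun h => hudV (by rw [← hfbu, ← h, hpd3])
          have hpdcs : pd ≠ cs := fun h => hsdV (by rw [← hfcs, ← h, hpd3])
          have h5 : ({ms, j, b, cs, pd} : Finset ℕ).card = 5 := by
            rw [Finset.card_insert_of_notMem, Finset.card_insert_of_notMem,
              Finset.card_insert_of_notMem, Finset.card_insert_of_notMem,
              Finset.card_singleton]
            · simp only [Finset.mem_singleton]
              exact fun h => hpdcs h.symm
            · simp only [Finset.mem_insert, Finset.mem_singleton, not_or]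
              exact ⟨by omega, fun h => hpdb h.symm⟩
            · simp only [Finset.mem_insert, Finset.mem_singleton, not_or]
              exact ⟨by omega, by omega, fun h => hpdj h.symm⟩
            · simp only [Finset.mem_insert, Finset.mem_singleton, not_or]
              exact ⟨by omega, by omega, by omega, fun h => hpdms h.symm⟩
          have hdisj : Disjoint (T.image pick) ({ms, j, b, cs, pd} : Finset ℕ) := by
            rw [Finset.disjoint_left]
            intro x hx hx2
            obtain ⟨t, htT, hteq⟩ := Finset.mem_image.mp hx
            obtain ⟨hts, htu, htN⟩ := hTmem t htT
            have hfx : f x = t := by rw [← hteq]; exact (hpickP t htN).2.2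
            simp only [Finset.mem_insert, Finset.mem_singleton] at hx2
            rcases hx2 with rfl | rfl | rfl | rfl | rfl
            · exact hts (by rw [← hfx, hfms])
            · exact htu (by rw [← hfx, hfj])
            · exact htu (by rw [← hfx, hfbu])
            · exact hts (by rw [← hfx, hfcs])
            · exact hd ((hfx.symm.trans hpd3) ▸ htN)
          have hSsub : T.image pick ∪ ({ms, j, b, cs, pd} : Finset ℕ) ⊆
              Finset.Icc ms cs := by
            intro x hx
            rw [Finset.mem_union] at hx
            rw [Finset.mem_Icc]
            rcases hx with hx | hx
            · obtain ⟨t, htT, rfl⟩ := Finset.mem_image.mp hx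
              have htN := (hTmem t htT).2.2
              exact ⟨(hpickP t htN).1, (hpickP t htN).2.1⟩
            · simp only [Finset.mem_insert, Finset.mem_singleton] at hx
              rcases hx with rfl | rfl | rfl | rfl | rfl
              · omega
              · omega
              · omega
              · omega
              · exact ⟨hpd1, hpd2⟩
          have hc := Finset.card_le_card hSsub
          rw [Finset.card_union_of_disjoint hdisj, hcardim, h5, Nat.card_Icc] at hc
          omega
        · exact ⟨ms, cs, by rw [hfms]; exact hsN, hrevms, hsp, hdp⟩
      · -- not spanning: descend
        simp only [Spans, not_forall, not_exists] at hsp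
        obtain ⟨s', hs'N, hmiss⟩ := hsp
        have hmiss' : ∀ p, ms ≤ p → p ≤ cs → f p ≠ s' := by
          intro p h1 h2 hp
          exact (hmiss p) ⟨h1, h2, hp⟩
        have hs'u : s' ≠ u := fun h =>
          hmiss' j (by omega) (by omega) (by rw [hfj, h])
        obtain ⟨m', him'', hm'j, hfm'⟩ := hspan s' hs'N
        have hm'ni : m' ≠ i := fun h => hs'u (by rw [← hfm', h, hu])
        have hm'nj : m' ≠ j := fun h => hs'u (by rw [← hfm', h, hfj])
        have hm'lt : m' < ms := by
          by_contra h
          push_neg at h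
          exact hmiss' m' h (by omega) hfm'
        have hc'spec : m' < Nat.find (hnext m') ∧ f (Nat.find (hnext m')) = f m' :=
          Nat.find_spec (hnext m')
        have hnos' : ∀ p, m' < p → p ≤ cs → f p ≠ s' := by
          intro p h1 h2 hp
          rcases le_or_gt p j with h | h
          · have := huniq s' hs'N hs'u p (by omega) h hp m' him'' hm'j hfm'
            omega
          · exact hmiss' p (by omega) h2 hp
        have hcs' : cs < Nat.find (hnext m') := by
          by_contra h
          push_neg at h
          exact hnos' (Nat.find (hnext m')) hc'spec.1 h (by rw [hc'spec.2, hfm'])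
        exact IH m' hm'lt s' (Nat.find (hnext m')) hs'N hs'u hfm'
          (by rw [hc'spec.2, hfm'])
          (lt_of_le_of_ne him'' (Ne.symm hm'ni))
          (lt_of_le_of_ne hm'j hm'nj) (by omega)
          (fun p h1 h2 hp => Nat.find_min (hnext m') h2 ⟨h1, by rw [hp, hfm']⟩)
  -- top level
  by_cases hsp0 : Spans N f j b
  · refine ⟨j, b, by rw [hfj]; exact hiN, ⟨hjb, by rw [hfbu, hfj], ?_⟩, hsp0, hnodep⟩
    intro p h1 h2
    rw [hfj]
    exact hbmin p h1 h2
  · simp only [Spans, not_forall, not_exists] at hsp0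
    obtain ⟨s, hsN, hmiss⟩ := hsp0
    have hmiss' : ∀ p, j ≤ p → p ≤ b → f p ≠ s := by
      intro p h1 h2 hp
      exact (hmiss p) ⟨h1, h2, hp⟩
    have hsu : s ≠ u := fun h => hmiss' j le_rfl (by omega) (by rw [hfj, h])
    obtain ⟨ms, hims, hmsj, hfms⟩ := hspan s hsN
    have hmsni : ms ≠ i := fun h => hsu (by rw [← hfms, h, hu])
    have hmsnj : ms ≠ j := fun h => hsu (by rw [← hfms, h, hfj])
    have hcspec : ms < Nat.find (hnext ms) ∧ f (Nat.find (hnext ms)) = f ms :=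
      Nat.find_spec (hnext ms)
    have hnos : ∀ p, ms < p → p ≤ b → f p ≠ s := by
      intro p h1 h2 hp
      rcases le_or_gt p j with h | h
      · have := huniq s hsN hsu p (by omega) h hp ms hims hmsj hfms
        omega
      · exact hmiss' p (by omega) h2 hp
    have hbcs : b < Nat.find (hnext ms) := by
      by_contra h
      push_neg at h
      exact hnos (Nat.find (hnext ms)) hcspec.1 h (by rw [hcspec.2, hfms])
    exact main ms s (Nat.find (hnext ms)) hsN hsu hfms (by rw [hcspec.2, hfms])
      (lt_of_le_of_ne hims (Ne.symm hmsni)) (lt_of_le_of_ne hmsj hmsnj) hbcs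
      (fun p h1 h2 hp => Nat.find_min (hnext ms) h2 ⟨h1, by rw [hp, hfms]⟩)
end

section
/- For k = pn + 1 (q = 0, p ≥ 1, k ≥ n+1), RD*(k) ≥ RD*(n+1): the optimal revisit time for a PMP-D walk with pn+1 visits is at least the optimal revisit time for one with n+1 visits. -/
/-! Take an optimal PMP-D walk with `k` visits and, among the targets, the one `t₀` whose last
visit before the depot visit at time `k` is earliest. The revisit of `t₀` starting there passes
the depot and every target, so its cost is at most `RD*(k)`. Keeping only the first visit to
each vertex of this closed stretch and rotating the result to start at the depot gives a PMP-D
walk with `n + 1` visits; each of its revisits is a full period, which by the triangle inequality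
costs at most the stretch. -/

section SegCost

variable {V : Type*} (c : V → V → ℝ)

theorem segCost_self (w : ℕ → V) (a : ℕ) : segCost c w a a = 0 := by
  simp [segCost]

theorem segCost_succ (w : ℕ → V) (a : ℕ) : segCost c w a (a + 1) = c (w a) (w (a + 1)) := by
  simp [segCost]

theorem segCost_add {w : ℕ → V} {a b d : ℕ} (hab : a ≤ b) (hbd : b ≤ d) :
    segCost c w a d = segCost c w a b + segCost c w b d := by
  unfold segCost
  rw [show d - a = (b - a) + (d - b) by omega, Finset.sum_range_add]
  congr 1
  refine Finset.sum_congr rfl fun m _ => ?_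
  rw [show a + (b - a + m) = b + m by omega]

theorem segCost_comp_add_right (w : ℕ → V) (s a : ℕ) :
    segCost c (fun b => w (b + s)) 0 a = segCost c w s (s + a) := by
  simp only [segCost, zero_add, Nat.sub_zero, Nat.add_sub_cancel_left]
  refine Finset.sum_congr rfl fun m _ => ?_
  rw [add_comm m s, add_right_comm m 1 s, add_comm m s]

theorem segCost_add_period {w : ℕ → V} {P : ℕ} (hw : Function.Periodic w P) (a : ℕ) :
    segCost c w a (a + P) = segCost c w 0 P := by
  induction a with
  | zero => rw [zero_add]
  | succ a ih =>
    have h := segCost_add c (w := w) (Nat.le_succ a) (show a + 1 ≤ a + 1 + P by omega)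
    rw [segCost_add c (show a ≤ a + P by omega) (show a + P ≤ a + 1 + P by omega), ih,
      add_right_comm, segCost_succ, segCost_succ, add_right_comm, hw, hw] at h
    linarith

variable {c}

theorem le_segCost_of_lt (htri : ∀ x y z, c x z ≤ c x y + c y z) (w : ℕ → V) {a b : ℕ}
    (hab : a < b) : c (w a) (w b) ≤ segCost c w a b := by
  induction b, hab using Nat.le_induction with
  | base => rw [segCost_succ]
  | succ b hab ih =>
    rw [segCost_add c (by omega : a ≤ b) (Nat.le_succ b), segCost_succ]
    linarith [htri (w a) (w b) (w (b + 1))]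

theorem sum_le_segCost_of_strictMonoOn (htri : ∀ x y z, c x z ≤ c x y + c y z) (w : ℕ → V)
    {idx : ℕ → ℕ} {M : ℕ} (hidx : StrictMonoOn idx (Set.Iic M)) :
    ∑ m ∈ Finset.range M, c (w (idx m)) (w (idx (m + 1))) ≤ segCost c w (idx 0) (idx M) := by
  induction M with
  | zero => simp [segCost_self]
  | succ M ih =>
    have hM : idx M < idx (M + 1) := hidx (by simp) (by simp) (Nat.lt_succ_self M)
    rw [Finset.sum_range_succ, segCost_add c (hidx.monotoneOn (by simp) (by simp) (Nat.zero_le M))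
      hM.le]
    gcongr
    · exact ih (hidx.mono (Set.Iic_subset_Iic.mpr (Nat.le_succ M)))
    · exact le_segCost_of_lt htri w hM

end SegCost

section CyclicWalk

open Fin.NatCast

variable {V : Type*} {n : ℕ}

def cyclicWalk (v : Fin (n + 1) → V) (b : ℕ) : V := v (b : Fin (n + 1))

theorem cyclicWalk_val (v : Fin (n + 1) → V) (r : Fin (n + 1)) : cyclicWalk v r = v r := by
  rw [cyclicWalk, Fin.cast_val_eq_self]

theorem cyclicWalk_periodic (v : Fin (n + 1) → V) : Function.Periodic (cyclicWalk v) (n + 1) := by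
  intro b
  rw [cyclicWalk, cyclicWalk, Nat.cast_add b (n + 1), Fin.natCast_self, add_zero]

theorem cyclicWalk_rotate (v : Fin (n + 1) → V) (s : Fin (n + 1)) (b : ℕ) :
    cyclicWalk (fun r => v (r + s)) b = cyclicWalk v (b + s) := by
  simp only [cyclicWalk, Nat.cast_add, Fin.cast_val_eq_self]

theorem cyclicWalk_eq_iff {v : Fin (n + 1) → V} (hv : Function.Injective v) {a b : ℕ} :
    cyclicWalk v a = cyclicWalk v b ↔ a ≡ b [MOD n + 1] := by
  rw [cyclicWalk, cyclicWalk, hv.eq_iff, Fin.ext_iff, Fin.val_natCast, Fin.val_natCast]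
  rfl

theorem IsRevisit.eq_add_of_cyclicWalk {v : Fin (n + 1) → V} (hv : Function.Injective v)
    {i j : ℕ} (h : IsRevisit (cyclicWalk v) i j) : j = i + (n + 1) := by
  obtain ⟨hij, hji, hmin⟩ := h
  have hle := ((cyclicWalk_eq_iff hv).mp hji.symm).add_le_of_lt hij
  by_contra hne
  exact hmin (i + (n + 1)) (by omega) (by omega) (cyclicWalk_periodic v i)

theorem isRevisit_cyclicWalk {v : Fin (n + 1) → V} (hv : Function.Injective v) (i : ℕ) :
    IsRevisit (cyclicWalk v) i (i + (n + 1)) := by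
  refine ⟨by omega, cyclicWalk_periodic v i, fun m him hmi hm => ?_⟩
  have := ((cyclicWalk_eq_iff hv).mp hm).symm.add_le_of_lt him
  omega

theorem spans_cyclicWalk {v : Fin (n + 1) → V} {S : Finset V} (hS : ∀ t ∈ S, t ∈ Set.range v)
    (i : ℕ) : Spans S (cyclicWalk v) i (i + (n + 1)) := by
  intro t ht
  obtain ⟨r, rfl⟩ := hS t ht
  refine ⟨i + (r - (i : Fin (n + 1))).val, by omega, by omega, ?_⟩
  simp only [cyclicWalk, Nat.cast_add, Fin.cast_val_eq_self, add_sub_cancel]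

variable (c : V → V → ℝ)

theorem segCost_cyclicWalk_rotate (v : Fin (n + 1) → V) (s : Fin (n + 1)) :
    segCost c (cyclicWalk fun r => v (r + s)) 0 (n + 1) = segCost c (cyclicWalk v) 0 (n + 1) := by
  simp only [funext (cyclicWalk_rotate v s), segCost_comp_add_right,
    segCost_add_period c (cyclicWalk_periodic v)]

theorem isGreatest_revCosts_cyclicWalk {v : Fin (n + 1) → V} (hv : Function.Injective v)
    {N : Finset V} (hN : ∀ t ∈ N, t ∈ Set.range v) {r : Fin (n + 1)} (hr : v r ∈ N) :
    IsGreatest (revCosts c N (n + 1) (cyclicWalk v)) (segCost c (cyclicWalk v) 0 (n + 1)) := by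
  refine ⟨⟨r, r + (n + 1), r.isLt, by rwa [cyclicWalk_val], isRevisit_cyclicWalk hv r,
    spans_cyclicWalk hN r, (segCost_add_period c (cyclicWalk_periodic v) r).symm⟩, ?_⟩
  rintro _ ⟨i, j, -, -, hij, -, rfl⟩
  rw [hij.eq_add_of_cyclicWalk hv, segCost_add_period c (cyclicWalk_periodic v)]

theorem isPMPDWalkFun_cyclicWalk {v : Fin (n + 1) → V} (hv : Function.Injective v)
    {N : Finset V} {dV : V} (hv0 : v 0 = dV) (hvN : ∀ r, v r ∈ N ∨ v r = dV)
    (hN : ∀ t ∈ N, t ∈ Set.range v) (hn : n ≠ 0) :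
    IsPMPDWalkFun N dV (n + 1) (cyclicWalk v) := by
  refine ⟨cyclicWalk_periodic v, fun b hb => ?_, fun b => ?_, fun b => hvN _, fun t ht => ?_⟩
  · have h := hv hb
    rw [Nat.cast_add, Nat.cast_one, left_eq_add, Fin.one_eq_zero_iff] at h
    omega
  · rw [cyclicWalk, ← hv0, hv.eq_iff, Fin.natCast_eq_zero]
  · obtain ⟨r, rfl⟩ := hN t ht
    exact ⟨r, r.isLt, cyclicWalk_val v r⟩

end CyclicWalk

section Shortcut

open Fin.NatCast

variable {V : Type*} {n : ℕ}

theorem exists_orderEmbedding_visits {S : Finset V} (hS : S.card = n + 1) {f : ℕ → V} {i j : ℕ}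
    (hfi : f i ∈ S) (hspan : ∀ x ∈ S, ∃ m, i ≤ m ∧ m < j ∧ f m = x) :
    ∃ e : Fin (n + 1) ↪o ℕ, e 0 = i ∧ (∀ r, e r < j) ∧ Function.Injective (f ∘ e) ∧
      Set.range (f ∘ e) = S := by
  classical
  let τ : V → ℕ := fun x => if h : ∃ m, i ≤ m ∧ m < j ∧ f m = x then Nat.find h else i
  have hτ : ∀ x ∈ S, i ≤ τ x ∧ τ x < j ∧ f (τ x) = x := fun x hx => by
    simpa only [τ, dif_pos (hspan x hx)] using Nat.find_spec (hspan x hx)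
  have hτi : τ (f i) = i := by
    refine le_antisymm ?_ (hτ _ hfi).1
    simp only [τ, dif_pos (hspan _ hfi)]
    exact Nat.find_min' _ ⟨le_rfl, (hτ _ hfi).1.trans_lt (hτ _ hfi).2.1, rfl⟩
  have hT : (S.image τ).card = n + 1 := by
    rw [Finset.card_image_of_injOn fun x hx y hy hxy => by
      rw [← (hτ x hx).2.2, ← (hτ y hy).2.2, hxy], hS]
  have hrange := Finset.range_orderEmbOfFin _ hT
  have hfe : ∀ r, ∃ x ∈ S, (S.image τ).orderEmbOfFin hT r = τ x := fun r =>
    Finset.mem_image.mp (Finset.orderEmbOfFin_mem _ hT r) |>.imp fun x hx => ⟨hx.1, hx.2.symm⟩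
  refine ⟨(S.image τ).orderEmbOfFin hT, ?_, fun r => ?_, fun a b hab => ?_, ?_⟩
  · rw [show (0 : Fin (n + 1)) = ⟨0, n.succ_pos⟩ from rfl, Finset.orderEmbOfFin_zero]
    refine le_antisymm (Finset.min'_le _ _ (Finset.mem_image.mpr ⟨_, hfi, hτi⟩)) ?_
    exact Finset.le_min' _ _ _ fun y hy => by
      obtain ⟨x, hx, rfl⟩ := Finset.mem_image.mp hy
      exact (hτ x hx).1
  · obtain ⟨x, hx, h⟩ := hfe r
    exact h ▸ (hτ x hx).2.1
  · obtain ⟨x, hx, ha⟩ := hfe a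
    obtain ⟨y, hy, hb⟩ := hfe b
    simp only [Function.comp_apply, ha, hb, (hτ x hx).2.2, (hτ y hy).2.2] at hab
    exact ((S.image τ).orderEmbOfFin hT).injective (ha.trans (hab ▸ hb.symm))
  · rw [Set.range_comp, hrange, Finset.coe_image, Set.image_image]
    exact Set.EqOn.image_eq_self fun x hx => (hτ x hx).2.2

variable {c : V → V → ℝ}

theorem segCost_cyclicWalk_comp_le (htri : ∀ x y z, c x z ≤ c x y + c y z) {f : ℕ → V}
    {e : Fin (n + 1) → ℕ} (he : StrictMono e) {i j : ℕ} (he0 : e 0 = i) (hej : ∀ r, e r < j)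
    (hfj : f j = f i) :
    segCost c (cyclicWalk (f ∘ e)) 0 (n + 1) ≤ segCost c f i j := by
  let idx : ℕ → ℕ := fun m => if h : m < n + 1 then e ⟨m, h⟩ else j
  have hidx : StrictMonoOn idx (Set.Iic (n + 1)) := by
    intro a ha b hb hab
    simp only [Set.mem_Iic] at ha hb
    simp only [idx, dif_pos (show a < n + 1 by omega)]
    split_ifs with hb'
    · exact he (Fin.mk_lt_mk.mpr hab)
    · exact hej _
  have hwalk : ∀ m ≤ n + 1, cyclicWalk (f ∘ e) m = f (idx m) := by
    intro m hm
    rcases hm.lt_or_eq with hm | rfl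
    · rw [← Fin.val_mk hm, cyclicWalk_val]
      simp only [idx, dif_pos hm, Function.comp_apply]
    · simp [cyclicWalk, idx, he0, hfj]
  calc segCost c (cyclicWalk (f ∘ e)) 0 (n + 1)
      = ∑ m ∈ Finset.range (n + 1), c (f (idx m)) (f (idx (m + 1))) := by
        refine Finset.sum_congr rfl fun m hm => ?_
        rw [Finset.mem_range] at hm
        rw [zero_add, hwalk m hm.le, hwalk (m + 1) hm]
    _ ≤ segCost c f (idx 0) (idx (n + 1)) := sum_le_segCost_of_strictMonoOn htri f hidx
    _ = segCost c f i j := by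
      simp only [idx, dif_pos n.succ_pos, lt_irrefl, dite_false, ← he0]
      rfl

theorem exists_cyclicWalk_segCost_le (htri : ∀ x y z, c x z ≤ c x y + c y z) {S : Finset V}
    (hS : S.card = n + 1) {d : V} (hd : d ∈ S) {f : ℕ → V} {i j : ℕ} (hfi : f i ∈ S)
    (hfj : f j = f i) (hspan : ∀ x ∈ S, ∃ m, i ≤ m ∧ m < j ∧ f m = x) :
    ∃ v : Fin (n + 1) → V, Function.Injective v ∧ Set.range v = S ∧ v 0 = d ∧
      segCost c (cyclicWalk v) 0 (n + 1) ≤ segCost c f i j := by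
  obtain ⟨e, he0, hej, hinj, hrange⟩ := exists_orderEmbedding_visits hS hfi hspan
  obtain ⟨s, hs⟩ : d ∈ Set.range (f ∘ e) := hrange ▸ hd
  refine ⟨fun r => (f ∘ e) (r + s), hinj.comp (add_left_injective s), ?_,
    by simp only [zero_add, hs], ?_⟩
  · rw [← hrange]
    exact (Equiv.addRight s).surjective.range_comp (f ∘ e)
  · rw [segCost_cyclicWalk_rotate]
    exact segCost_cyclicWalk_comp_le htri e.strictMono he0 hej hfj

end Shortcut

section PMPD

variable {V : Type*} {c : V → V → ℝ} {N : Finset V} {dV : V}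

theorem exists_mem_pmpdRevTimes_le (htri : ∀ x y z, c x z ≤ c x y + c y z) (hd : dV ∉ N)
    {f : ℕ → V} {i j : ℕ} (hrev : IsRevisit f i j) (hfi : f i ∈ N) (hspan : Spans N f i j)
    (hdep : HasDepot dV f i j) :
    ∃ C ∈ pmpdRevTimes c N dV (N.card + 1), C ≤ segCost c f i j := by
  classical
  have hvisit : ∀ x ∈ insert dV N, ∃ m, i ≤ m ∧ m < j ∧ f m = x := by
    intro x hx
    obtain ⟨m, him, hmj, rfl⟩ : ∃ m, i ≤ m ∧ m ≤ j ∧ f m = x := by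
      rcases Finset.mem_insert.mp hx with rfl | hx
      exacts [hdep, hspan x hx]
    rcases hmj.lt_or_eq with hmj | rfl
    exacts [⟨m, him, hmj, rfl⟩, ⟨i, le_rfl, hrev.1, hrev.2.1.symm⟩]
  obtain ⟨v, hv, hrange, hv0, hcost⟩ := exists_cyclicWalk_segCost_le htri
    (Finset.card_insert_of_notMem hd) (Finset.mem_insert_self dV N) (Finset.mem_insert_of_mem hfi)
    hrev.2.1 hvisit
  have hvN : ∀ t ∈ N, t ∈ Set.range v := fun t ht => hrange ▸ Finset.mem_insert_of_mem ht
  obtain ⟨r, hr⟩ := hvN _ hfi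
  refine ⟨_, ⟨cyclicWalk v, isPMPDWalkFun_cyclicWalk hv hv0 (fun q => ?_) hvN
    (Finset.card_ne_zero_of_mem hfi), isGreatest_revCosts_cyclicWalk c hv hvN (hr ▸ hfi)⟩, hcost⟩
  have hq : v q ∈ (insert dV N : Finset V) := Finset.mem_coe.mp (hrange ▸ Set.mem_range_self q)
  exact (Finset.mem_insert.mp hq).symm

theorem IsPMPDWalkFun.exists_revisit_spans_hasDepot {k : ℕ} {f : ℕ → V}
    (hf : IsPMPDWalkFun N dV k f) (hN : N.Nonempty) :
    ∃ i j, i < k ∧ f i ∈ N ∧ IsRevisit f i j ∧ Spans N f i j ∧ HasDepot dV f i j := by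
  classical
  obtain ⟨hper, -, hdep, -, hvis⟩ := hf
  let last : V → ℕ := fun t => Nat.findGreatest (f · = t) (k - 1)
  have hlast : ∀ t ∈ N, last t < k ∧ f (last t) = t := fun t ht => by
    obtain ⟨m, hmk, hmt⟩ := hvis t ht
    have hm : m ≤ k - 1 := by omega
    exact ⟨(Nat.findGreatest_le (k - 1)).trans_lt (by omega),
      Nat.findGreatest_spec (P := (f · = t)) hm hmt⟩
  have hlast_max : ∀ t m, last t < m → m < k → f m ≠ t := fun t m h hmk =>
    Nat.findGreatest_is_greatest h (by omega)
  obtain ⟨t₀, ht₀, hmin⟩ := N.exists_min_image last hN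
  obtain ⟨hik, hfi⟩ := hlast t₀ ht₀
  have hnext : ∃ m, last t₀ < m ∧ f m = t₀ := ⟨last t₀ + k, by omega, (hper _).trans hfi⟩
  obtain ⟨hij, hfj⟩ := Nat.find_spec hnext
  have hkj : k ≤ Nat.find hnext := by
    by_contra! hjk
    exact hlast_max t₀ _ hij hjk hfj
  refine ⟨last t₀, Nat.find hnext, hik, by rwa [hfi], ⟨hij, hfj.trans hfi.symm, ?_⟩,
    fun t ht => ⟨last t, hmin t ht, ((hlast t ht).1.trans_le hkj).le, (hlast t ht).2⟩,
    ⟨k, hik.le, hkj, (hdep k).mpr dvd_rfl⟩⟩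
  intro m him hmj hm
  exact Nat.find_min hnext hmj ⟨him, hm.trans hfi⟩

end PMPD

theorem lb_q_zero_general {V : Type*}
    (c : V → V → ℝ) (N : Finset V) (dV : V) (hd : dV ∉ N)
    (htri : ∀ x y z, c x z ≤ c x y + c y z)
    (k : ℕ)
    (RD : ℕ → ℝ)
    (hRDk : IsLeast (pmpdRevTimes c N dV k) (RD k))
    (hRD1 : IsLeast (pmpdRevTimes c N dV (N.card + 1)) (RD (N.card + 1))) :
    RD (N.card + 1) ≤ RD k := by
  obtain ⟨⟨f, hf, hmax⟩, -⟩ := hRDk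
  obtain ⟨i₀, -, -, hi₀, -⟩ := hmax.1
  obtain ⟨i, j, hik, hfi, hrev, hspan, hdep⟩ := hf.exists_revisit_spans_hasDepot ⟨_, hi₀⟩
  obtain ⟨C, hC, hCle⟩ := exists_mem_pmpdRevTimes_le htri hd hrev hfi hspan hdep
  calc RD (N.card + 1) ≤ C := hRD1.2 hC
    _ ≤ segCost c f i j := hCle
    _ ≤ RD k := hmax.2 ⟨i, j, hik, hfi, hrev, hspan, rfl⟩

/-- for `k = pn+1` (the case `q = 0`), `RD*(k) ≥ RD*(n+1)`. -/
theorem lb_q_zero {V : Type*} [DecidableEq V]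
    (c : V → V → ℝ) (N : Finset V) (dV : V) (hd : dV ∉ N) (hn : 3 ≤ N.card)
    (hsymm : ∀ x y, c x y = c y x) (hnonneg : ∀ x y, 0 ≤ c x y)
    (htri : ∀ x y z, c x z ≤ c x y + c y z)
    (p k : ℕ) (hp : 1 ≤ p) (hk : k = p * N.card + 1)
    (RD : ℕ → ℝ)
    (hRDk : IsLeast (pmpdRevTimes c N dV k) (RD k))
    (hRD1 : IsLeast (pmpdRevTimes c N dV (N.card + 1)) (RD (N.card + 1))) :
    RD (N.card + 1) ≤ RD k :=
  lb_q_zero_general c N dV hd htri k RD hRDk hRD1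
end

section
/- Suppose n ≥ 3 and k = pn + 1 for some p ≥ 1, and suppose the optimal (n+1)-visit PMP-D walk WD*(n+1) visits each target exactly once. If the depot can be shortcut from WD*(n+1) to obtain an n-visit target-only cycle W_SD, then the k-visit walk obtained by concatenating (a rotation of) WD*(n+1) with p−1 copies of W_SD is a feasible PMP-D walk with k visits whose revisit time equals RD*(n+1); hence RD*(pn+1) = RD*(n+1). -/
/-!
The concatenated walk `(d, u_1, ..., u_n, u_1, ..., u_n, ..., u_1, ..., u_n)` has two kinds of
revisits. Those inside the copies of `W_SD = (u_1, ..., u_n)` traverse `W_SD` once, which by the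
triangle inequality costs at most the travel time of `WD*(n+1) = (d, u_1, ..., u_n)`; those that
pass the depot traverse a rotation of `WD*(n+1)`. Since `WD*(n+1)` visits each target once, its
revisit time is its travel time `RD*(n+1)`, so the concatenated walk has revisit time `RD*(n+1)`
and `RD*(pn+1) ≤ RD*(n+1)`.

Conversely (Theorem 1), in any PMP-D walk take the target `t` whose last visit before the depot
comes first. Its revisit across the depot spans all targets, and shortcutting it to the last visit
of every target yields a walk `(d, t, ...)` visiting each target once, whose travel time is at most
the revisit time of the original walk. Hence `RD*(n+1) ≤ RD*(pn+1)`.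
-/

section

open Set Function

variable {V : Type*}

section SegCost

variable (c : V → V → ℝ) (f : ℕ → V)

lemma segCost_self_s16 (i : ℕ) : segCost c f i i = 0 := by
  simp [segCost]

lemma segCost_add_one (i : ℕ) : segCost c f i (i + 1) = c (f i) (f (i + 1)) := by
  simp [segCost]

lemma segCost_add_s16 {i j l : ℕ} (hij : i ≤ j) (hjl : j ≤ l) :
    segCost c f i l = segCost c f i j + segCost c f j l := by
  unfold segCost
  rw [show l - i = (j - i) + (l - j) by omega, Finset.sum_range_add]
  congr 1
  refine Finset.sum_congr rfl fun m _ => ?_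
  rw [show i + (j - i + m) = j + m by omega]

lemma segCost_of_eqOn_add {g : ℕ → V} {s i j : ℕ}
    (hfg : ∀ m, i ≤ m → m ≤ j → f (m + s) = g m) :
    segCost c f (i + s) (j + s) = segCost c g i j := by
  unfold segCost
  rw [show j + s - (i + s) = j - i by omega]
  refine Finset.sum_congr rfl fun m hm => ?_
  have hm : m < j - i := Finset.mem_range.1 hm
  rw [show i + s + m = (i + m) + s by omega, hfg _ (by omega) (by omega),
    show i + m + s + 1 = (i + m + 1) + s by omega, hfg _ (by omega) (by omega)]

lemma segCost_add_period_s16 {P : ℕ} (hf : Periodic f P) (i : ℕ) :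
    segCost c f i (i + P) = segCost c f 0 P := by
  induction i with
  | zero => rw [zero_add]
  | succ i ih =>
    have h₁ := segCost_add_s16 c f (Nat.le_succ i) (by omega : i + 1 ≤ i + 1 + P)
    have h₂ := segCost_add_s16 c f (Nat.le_add_right i P) (by omega : i + P ≤ i + 1 + P)
    have h₃ : segCost c f (i + P) (i + 1 + P) = segCost c f i (i + 1) :=
      segCost_of_eqOn_add c f fun m _ _ => hf m
    linarith

variable {c}

lemma le_segCost (htri : ∀ x y z, c x z ≤ c x y + c y z) {i j : ℕ} (hij : i < j) :
    c (f i) (f j) ≤ segCost c f i j := by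
  induction j, hij using Nat.le_induction with
  | base => rw [segCost_add_one]
  | succ j hij ih =>
    rw [segCost_add_s16 c f (by omega) (Nat.le_succ j), segCost_add_one]
    linarith [htri (f i) (f j) (f (j + 1))]

lemma segCost_le_segCost_comp (htri : ∀ x y z, c x z ≤ c x y + c y z) {g : ℕ → V}
    {φ : ℕ → ℕ} {i j : ℕ} (hij : i ≤ j) (hφ : ∀ m, i ≤ m → m < j → φ m < φ (m + 1))
    (hfg : ∀ m, i ≤ m → m ≤ j → f m = g (φ m)) :
    segCost c f i j ≤ segCost c g (φ i) (φ j) := by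
  suffices φ i ≤ φ j ∧ segCost c f i j ≤ segCost c g (φ i) (φ j) from this.2
  induction j, hij using Nat.le_induction with
  | base => simp [segCost_self_s16]
  | succ j hij ih =>
    obtain ⟨hmono, hle⟩ := ih (fun m h1 h2 => hφ m h1 (by omega))
      (fun m h1 h2 => hfg m h1 (by omega))
    have hstep := hφ j hij (Nat.lt_succ_self j)
    refine ⟨hmono.trans hstep.le, ?_⟩
    rw [segCost_add_s16 c f hij (Nat.le_succ j), segCost_add_s16 c g hmono hstep.le, segCost_add_one,
      hfg j hij (Nat.le_succ j), hfg (j + 1) (by omega) le_rfl]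
    exact add_le_add hle (le_segCost g htri hstep)

end SegCost

section Revisit

variable {f g : ℕ → V}

lemma IsRevisit.eq {i j j' : ℕ} (h : IsRevisit f i j) (h' : IsRevisit f i j') : j = j' := by
  by_contra hne
  rcases Nat.lt_or_gt_of_ne hne with hlt | hlt
  · exact h'.2.2 j h.1 hlt h.2.1
  · exact h.2.2 j' h'.1 hlt h'.2.1

lemma isRevisit_of_injOn {i j : ℕ} (hij : i < j) (hinj : InjOn f (Ico i j)) (heq : f j = f i) :
    IsRevisit f i j :=
  ⟨hij, heq, fun m h1 h2 hm => by
    have := hinj ⟨h1.le, h2⟩ ⟨le_rfl, hij⟩ hm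
    omega⟩

lemma IsRevisit.of_eqOn_add {s i j : ℕ} (hfg : ∀ m, i ≤ m → m ≤ j → f (m + s) = g m)
    (h : IsRevisit g i j) : IsRevisit f (i + s) (j + s) := by
  refine ⟨by have := h.1; omega, by rw [hfg j h.1.le le_rfl, hfg i le_rfl h.1.le, h.2.1],
    fun m h1 h2 hm => ?_⟩
  refine h.2.2 (m - s) (by omega) (by omega) ?_
  rw [← hfg _ (by omega) (by omega), ← hfg i le_rfl h.1.le, Nat.sub_add_cancel (by omega)]
  exact hm

lemma Spans.of_eqOn_add {N : Finset V} {s i j : ℕ}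
    (hfg : ∀ m, i ≤ m → m ≤ j → f (m + s) = g m) (h : Spans N g i j) :
    Spans N f (i + s) (j + s) := by
  intro t ht
  obtain ⟨m, h1, h2, rfl⟩ := h t ht
  exact ⟨m + s, by omega, by omega, hfg m h1 h2⟩

namespace Function.Periodic

variable {P : ℕ}

lemma injOn_Ico (hf : Periodic f P) (hinj : InjOn f (Ico 0 P)) (i : ℕ) :
    InjOn f (Ico i (i + P)) := by
  intro x hx y hy hxy
  simp only [mem_Ico] at hx hy
  have hmod : x % P = y % P :=
    hinj (by simp [Nat.mod_lt x (by omega : 0 < P)]) (by simp [Nat.mod_lt y (by omega : 0 < P)])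
      (by rw [hf.map_mod_nat, hf.map_mod_nat, hxy])
  have key : ∀ a b, a ≤ b → b < a + P → a % P = b % P → a = b := fun a b hab hb h => by
    have := Nat.eq_zero_of_dvd_of_lt ((Nat.modEq_iff_dvd' hab).1 h) (by omega)
    omega
  rcases le_total x y with hle | hle
  · exact key x y hle (by omega) hmod
  · exact (key y x hle (by omega) hmod.symm).symm

lemma isRevisit (hf : Periodic f P) (hP : 0 < P) (hinj : InjOn f (Ico 0 P)) (i : ℕ) :
    IsRevisit f i (i + P) :=
  isRevisit_of_injOn (by omega) (hf.injOn_Ico hinj i) (hf i)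

lemma spans {N : Finset V} (hf : Periodic f P) (hcov : ∀ t ∈ N, ∃ r < P, f r = t) :
    Spans N f 1 (1 + P) := by
  intro t ht
  obtain ⟨r, hr, rfl⟩ := hcov t ht
  rcases r.eq_zero_or_pos with rfl | hr0
  · exact ⟨P, by omega, by omega, by simpa using hf 0⟩
  · exact ⟨r, hr0, by omega, rfl⟩

end Function.Periodic

end Revisit

namespace IsPMPDWalkFun

variable {N : Finset V} {d : V} {k : ℕ} {f : ℕ → V}

lemma periodic (hf : IsPMPDWalkFun N d k f) : Periodic f k := hf.1

lemma apply_ne_apply_succ (hf : IsPMPDWalkFun N d k f) (i : ℕ) : f i ≠ f (i + 1) := hf.2.1 i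

lemma apply_eq_iff (hf : IsPMPDWalkFun N d k f) (i : ℕ) : f i = d ↔ k ∣ i := hf.2.2.1 i

lemma exists_apply_eq (hf : IsPMPDWalkFun N d k f) {t : V} (ht : t ∈ N) : ∃ i < k, f i = t :=
  hf.2.2.2.2 t ht

lemma apply_zero (hf : IsPMPDWalkFun N d k f) : f 0 = d := (hf.apply_eq_iff 0).2 (dvd_zero k)

lemma apply_self (hf : IsPMPDWalkFun N d k f) : f k = d := (hf.apply_eq_iff k).2 dvd_rfl

lemma apply_mem (hf : IsPMPDWalkFun N d k f) {i : ℕ} (hi : ¬ k ∣ i) : f i ∈ N :=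
  (hf.2.2.2.1 i).resolve_right (mt (hf.apply_eq_iff i).1 hi)

lemma apply_one_mem (hf : IsPMPDWalkFun N d k f) : f 1 ∈ N :=
  (hf.2.2.2.1 1).resolve_right fun h =>
    hf.apply_ne_apply_succ 0 (by rw [hf.apply_zero, zero_add, h])

lemma one_lt (hf : IsPMPDWalkFun N d k f) : 1 < k := by
  obtain ⟨i, hi, -⟩ := hf.exists_apply_eq hf.apply_one_mem
  have hk1 : k ≠ 1 := by
    rintro rfl
    exact hf.apply_ne_apply_succ 0 (by rw [hf.apply_zero, zero_add, hf.apply_self])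
  omega

lemma injOn_Ico (hf : IsPMPDWalkFun N d k f) (honce : ∀ t ∈ N, ∃! i, i < k ∧ f i = t) :
    InjOn f (Ico 0 k) := by
  intro x hx y hy hxy
  simp only [mem_Ico, zero_le, true_and] at hx hy
  by_cases hdx : k ∣ x
  · have hdy : k ∣ y := (hf.apply_eq_iff y).1 (hxy ▸ (hf.apply_eq_iff x).2 hdx)
    rw [Nat.eq_zero_of_dvd_of_lt hdx hx, Nat.eq_zero_of_dvd_of_lt hdy hy]
  · exact (honce _ (hf.apply_mem hdx)).unique ⟨hx, rfl⟩ ⟨hy, hxy.symm⟩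

/-- Each revisit of a walk that is injective on a period lasts exactly one period. -/
lemma isGreatest_revCosts (c : V → V → ℝ) (hf : IsPMPDWalkFun N d k f)
    (hinj : InjOn f (Ico 0 k)) : IsGreatest (revCosts c N k f) (segCost c f 0 k) := by
  have hrev := hf.periodic.isRevisit (by have := hf.one_lt; omega) hinj
  refine ⟨⟨1, 1 + k, hf.one_lt, hf.apply_one_mem, hrev 1,
    hf.periodic.spans fun _ => hf.exists_apply_eq, (segCost_add_period_s16 c f hf.periodic 1).symm⟩, ?_⟩
  rintro _ ⟨i, j, -, -, hij, -, rfl⟩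
  rw [hij.eq (hrev i), segCost_add_period_s16 c f hf.periodic]

end IsPMPDWalkFun

def depotWalk (d : V) (k : ℕ) (w : ℕ → V) (m : ℕ) : V :=
  if m % k = 0 then d else w (m % k)

section DepotWalk

variable {N : Finset V} {d : V} {k : ℕ} {w : ℕ → V}

lemma depotWalk_periodic : Periodic (depotWalk d k w) k := fun m => by
  simp [depotWalk]

lemma depotWalk_of_mod_eq_zero {m : ℕ} (hm : m % k = 0) : depotWalk d k w m = d := by
  simp [depotWalk, hm]

lemma depotWalk_of_lt {m : ℕ} (h0 : 0 < m) (hm : m < k) : depotWalk d k w m = w m := by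
  simp [depotWalk, Nat.mod_eq_of_lt hm, h0.ne']

lemma isPMPDWalkFun_depotWalk (hd : d ∉ N) (hk : 2 ≤ k) (hmem : ∀ r ∈ Ioo 0 k, w r ∈ N)
    (hstep : ∀ r ∈ Ioo 0 (k - 1), w r ≠ w (r + 1)) (hcov : ∀ t ∈ N, ∃ r ∈ Ioo 0 k, w r = t) :
    IsPMPDWalkFun N d k (depotWalk d k w) := by
  have hmod : ∀ m, m % k < k := fun m => Nat.mod_lt m (by omega)
  have hdepot : ∀ m, depotWalk d k w m = d ↔ m % k = 0 := fun m => by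
    unfold depotWalk
    split_ifs with h
    · simp [h]
    · simp only [h, iff_false]
      exact fun he => hd (he ▸ hmem _ ⟨Nat.pos_of_ne_zero h, hmod m⟩)
  refine ⟨depotWalk_periodic, fun m he => ?_,
    fun m => (hdepot m).trans Nat.dvd_iff_mod_eq_zero.symm, fun m => ?_, fun t ht => ?_⟩
  · have hlt := hmod m
    have hsucc : (m + 1) % k = if k ≤ m % k + 1 then 0 else m % k + 1 := by
      rw [Nat.add_mod_eq_ite, Nat.one_mod_eq_one.2 (by omega)]
      split_ifs <;> omega
    by_cases hin : 0 < m % k ∧ m % k + 1 < k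
    · rw [if_neg (by omega)] at hsucc
      simp only [depotWalk, if_neg hin.1.ne', hsucc, if_neg (show m % k + 1 ≠ 0 by omega)]
        at he
      exact hstep _ ⟨hin.1, by omega⟩ he
    · have := (hdepot m).symm.trans (he ▸ hdepot (m + 1))
      split_ifs at hsucc <;> omega
  · by_cases h : m % k = 0
    · exact Or.inr (depotWalk_of_mod_eq_zero h)
    · simp only [depotWalk, h, if_false]
      exact Or.inl (hmem _ ⟨Nat.pos_of_ne_zero h, hmod m⟩)
  · obtain ⟨r, hr, rfl⟩ := hcov t ht
    exact ⟨r, hr.2, depotWalk_of_lt hr.1 hr.2⟩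

lemma injOn_depotWalk (hd : d ∉ N) (hmem : ∀ r ∈ Ioo 0 k, w r ∈ N)
    (hinj : InjOn w (Ioo 0 k)) : InjOn (depotWalk d k w) (Ico 0 k) := by
  have key : ∀ x ∈ Ico 0 k, ∀ y ∈ Ico 0 k, x = 0 → depotWalk d k w x = depotWalk d k w y →
      y = 0 := by
    rintro x - y ⟨-, hy⟩ rfl hxy
    by_contra hy0
    rw [depotWalk_of_mod_eq_zero (Nat.zero_mod k), depotWalk_of_lt (Nat.pos_of_ne_zero hy0) hy]
      at hxy
    exact hd (hxy ▸ hmem y ⟨Nat.pos_of_ne_zero hy0, hy⟩)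
  intro x hx y hy hxy
  by_cases hx0 : x = 0
  · rw [hx0, key x hx y hy hx0 hxy]
  by_cases hy0 : y = 0
  · exact absurd (key y hy x hx hy0 hxy.symm) hx0
  rw [depotWalk_of_lt (Nat.pos_of_ne_zero hx0) hx.2,
    depotWalk_of_lt (Nat.pos_of_ne_zero hy0) hy.2] at hxy
  exact hinj ⟨Nat.pos_of_ne_zero hx0, hx.2⟩ ⟨Nat.pos_of_ne_zero hy0, hy.2⟩ hxy

end DepotWalk

/-- The depot-shortcut cycle `W_SD = (u_1, ..., u_n)` of a walk `(d, u_1, ..., u_n)`,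
repeated with period `n`. -/
def shortcutCycle (f₁ : ℕ → V) (n j : ℕ) : V := f₁ (j % n + 1)

/-- The concatenation `(d, u_1, ..., u_n, u_1, ..., u_n, ..., u_1, ..., u_n)` of `WD*(n+1)` with
`p - 1` copies of `W_SD`, repeated with period `p * n + 1`. -/
def concatWalk (d : V) (f₁ : ℕ → V) (n p : ℕ) : ℕ → V :=
  depotWalk d (p * n + 1) fun r => shortcutCycle f₁ n (r - 1)

section Concat

variable {c : V → V → ℝ} {N : Finset V} {d : V} {n p : ℕ} {f₁ : ℕ → V}

lemma shortcutCycle_periodic : Periodic (shortcutCycle f₁ n) n := fun j => by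
  simp [shortcutCycle]

lemma shortcutCycle_of_lt {j : ℕ} (hj : j < n) : shortcutCycle f₁ n j = f₁ (j + 1) := by
  rw [shortcutCycle, Nat.mod_eq_of_lt hj]

lemma shortcutCycle_mem (hf₁ : IsPMPDWalkFun N d (n + 1) f₁) (hn : 0 < n) (j : ℕ) :
    shortcutCycle f₁ n j ∈ N :=
  hf₁.apply_mem (Nat.not_dvd_of_pos_of_lt (Nat.succ_pos _)
    (Nat.succ_lt_succ (Nat.mod_lt j hn)))

lemma injOn_shortcutCycle (hinj₁ : InjOn f₁ (Ico 0 (n + 1))) :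
    InjOn (shortcutCycle f₁ n) (Ico 0 n) := by
  intro x hx y hy hxy
  simp only [mem_Ico, zero_le, true_and] at hx hy
  rw [shortcutCycle_of_lt hx, shortcutCycle_of_lt hy] at hxy
  have := hinj₁ (by simp; omega) (by simp; omega) hxy
  omega

lemma segCost_shortcutCycle_le (htri : ∀ x y z, c x z ≤ c x y + c y z)
    (hf₁ : Periodic f₁ (n + 1)) (hn : 0 < n) :
    segCost c (shortcutCycle f₁ n) 0 n ≤ segCost c f₁ 0 (n + 1) := by
  rw [← segCost_add_period_s16 c f₁ hf₁ 1]
  have := segCost_le_segCost_comp (shortcutCycle f₁ n) htri (g := f₁)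
    (φ := fun m => if m < n then m + 1 else m + 2) (Nat.zero_le n)
    (fun m _ _ => by split_ifs <;> omega) fun m _ hm => by
      rcases hm.lt_or_eq with hm | rfl
      · rw [shortcutCycle_of_lt hm, if_pos hm]
      · rw [if_neg (lt_irrefl m), shortcutCycle, Nat.mod_self,
          show m + 2 = 1 + (m + 1) by omega, hf₁ 1]
  simpa [hn, show n + 2 = 1 + (n + 1) by omega] using this

lemma concatWalk_add_one {m : ℕ} (hm : m + 1 < p * n + 1) :
    concatWalk d f₁ n p (m + 1) = shortcutCycle f₁ n m :=
  depotWalk_of_lt m.succ_pos hm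

lemma isPMPDWalkFun_concatWalk (hd : d ∉ N) (hf₁ : IsPMPDWalkFun N d (n + 1) f₁)
    (hinj₁ : InjOn f₁ (Ico 0 (n + 1))) (hn : 2 ≤ n) (hp : 1 ≤ p) :
    IsPMPDWalkFun N d (p * n + 1) (concatWalk d f₁ n p) := by
  have hnp : n ≤ p * n := Nat.le_mul_of_pos_left n hp
  refine isPMPDWalkFun_depotWalk hd (by omega) (fun r _ => shortcutCycle_mem hf₁ (by omega) _)
    (fun r hr he => ?_) fun t ht => ?_
  · have := shortcutCycle_periodic.injOn_Ico (injOn_shortcutCycle hinj₁) (r - 1)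
      (by simp; omega) (by simp; omega) he
    simp only [mem_Ioo] at hr
    omega
  · obtain ⟨i, hi, rfl⟩ := hf₁.exists_apply_eq ht
    have hi0 : i ≠ 0 := by
      rintro rfl
      exact hd (hf₁.apply_zero ▸ ht)
    refine ⟨i, ⟨by omega, by omega⟩, ?_⟩
    rw [shortcutCycle_of_lt (by omega), Nat.sub_add_cancel (by omega)]

lemma concatWalk_add_sub_one_mul (hf₁ : IsPMPDWalkFun N d (n + 1) f₁) (hp : 1 ≤ p) {m : ℕ}
    (h1 : 1 ≤ m) (h2 : m ≤ 2 * n + 1) :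
    concatWalk d f₁ n p (m + (p - 1) * n) = f₁ m := by
  obtain ⟨q, rfl⟩ := Nat.exists_eq_add_of_le' hp
  have hq : (q + 1) * n = q * n + n := add_one_mul q n
  rw [Nat.add_sub_cancel]
  rcases Nat.lt_or_ge m (n + 1) with hm | hm
  · rw [show m + q * n = (m - 1) + 1 + q * n by omega, add_assoc, add_comm 1,
      ← add_assoc, concatWalk_add_one (by omega), shortcutCycle, Nat.add_mul_mod_self_right,
      Nat.mod_eq_of_lt (by omega), Nat.sub_add_cancel h1]
  rcases hm.eq_or_lt with rfl | hm
  · have hmod : (n + 1 + q * n) % ((q + 1) * n + 1) = 0 := by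
      rw [hq, show n + 1 + q * n = q * n + n + 1 by omega, Nat.mod_self]
    rw [concatWalk, depotWalk_of_mod_eq_zero hmod, hf₁.apply_self]
  · rw [show m + q * n = (m - (n + 2)) + 1 + ((q + 1) * n + 1) by omega]
    rw [concatWalk, depotWalk_periodic, ← concatWalk, concatWalk_add_one (by omega),
      shortcutCycle_of_lt (by omega), ← hf₁.periodic]
    congr 1
    omega

lemma isGreatest_revCosts_concatWalk (hd : d ∉ N) (htri : ∀ x y z, c x z ≤ c x y + c y z)
    (hf₁ : IsPMPDWalkFun N d (n + 1) f₁) (hinj₁ : InjOn f₁ (Ico 0 (n + 1))) (hn : 2 ≤ n)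
    (hp : 1 ≤ p) :
    IsGreatest (revCosts c N (p * n + 1) (concatWalk d f₁ n p)) (segCost c f₁ 0 (n + 1)) := by
  have hk : p * n + 1 = (p - 1) * n + n + 1 := by
    rw [Nat.sub_one_mul, Nat.sub_add_cancel (Nat.le_mul_of_pos_left n hp)]
  set f := concatWalk d f₁ n p
  set q := (p - 1) * n
  have hseam : ∀ m, 1 ≤ m → m ≤ 2 * n + 1 → f (m + q) = f₁ m :=
    fun m h1 h2 => concatWalk_add_sub_one_mul hf₁ hp h1 h2
  have hcross : ∀ a, 1 ≤ a → a ≤ n → IsRevisit f (a + q) (a + (n + 1) + q) ∧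
      segCost c f (a + q) (a + (n + 1) + q) = segCost c f₁ 0 (n + 1) := by
    intro a h1 h2
    have hfg : ∀ m, a ≤ m → m ≤ a + (n + 1) → f (m + q) = f₁ m :=
      fun m _ _ => hseam m (by omega) (by omega)
    exact ⟨(hf₁.periodic.isRevisit (by omega) hinj₁ a).of_eqOn_add hfg,
      by rw [segCost_of_eqOn_add c f hfg, segCost_add_period_s16 c f₁ hf₁.periodic]⟩
  have hspans : Spans N f (1 + q) (1 + (n + 1) + q) :=
    (hf₁.periodic.spans fun _ => hf₁.exists_apply_eq).of_eqOn_add fun m _ _ =>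
      hseam m (by omega) (by omega)
  refine ⟨⟨1 + q, 1 + (n + 1) + q, by omega, ?_, (hcross 1 le_rfl (by omega)).1, hspans,
    (hcross 1 le_rfl (by omega)).2.symm⟩, ?_⟩
  · rw [hseam 1 le_rfl (by omega)]
    exact hf₁.apply_one_mem
  rintro _ ⟨i, j, hik, hiN, hij, -, rfl⟩
  have hi0 : i ≠ 0 := by
    rintro rfl
    have hf0 : f 0 = d := depotWalk_of_mod_eq_zero (Nat.zero_mod _)
    exact hd (hf0 ▸ hiN)
  rcases Nat.lt_or_ge (i + n) (p * n + 1) with h | h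
  · obtain ⟨i, rfl⟩ : ∃ i', i = i' + 1 := ⟨i - 1, by omega⟩
    have hfg : ∀ m, i ≤ m → m ≤ i + n → f (m + 1) = shortcutCycle f₁ n m :=
      fun m _ _ => concatWalk_add_one (by omega)
    have hrev := shortcutCycle_periodic.isRevisit (by omega) (injOn_shortcutCycle hinj₁) i
    rw [hij.eq (hrev.of_eqOn_add hfg), segCost_of_eqOn_add c _ hfg,
      segCost_add_period_s16 c _ shortcutCycle_periodic]
    exact segCost_shortcutCycle_le htri hf₁.periodic (by omega)
  · obtain ⟨a, rfl⟩ : ∃ a, i = a + q := ⟨i - q, by omega⟩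
    rw [hij.eq (hcross a (by omega) (by omega)).1, (hcross a (by omega) (by omega)).2]

end Concat

def lastVisit [DecidableEq V] (g : ℕ → V) (k : ℕ) (t : V) : ℕ :=
  Nat.findGreatest (g · = t) (k - 1)

section LastVisit

variable [DecidableEq V] {N : Finset V} {d : V} {k : ℕ} {g : ℕ → V} {t : V}

lemma apply_lastVisit (hg : IsPMPDWalkFun N d k g) (ht : t ∈ N) : g (lastVisit g k t) = t := by
  obtain ⟨i, hi, rfl⟩ := hg.exists_apply_eq ht
  exact Nat.findGreatest_spec (P := (g · = g i)) (by omega : i ≤ k - 1) rfl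

lemma lastVisit_pos (hd : d ∉ N) (hg : IsPMPDWalkFun N d k g) (ht : t ∈ N) :
    0 < lastVisit g k t := by
  refine Nat.pos_of_ne_zero fun h0 => hd ?_
  rw [← hg.apply_zero, ← h0, apply_lastVisit hg ht]
  exact ht

lemma lastVisit_lt (hg : IsPMPDWalkFun N d k g) : lastVisit g k t < k :=
  have := hg.one_lt
  (Nat.findGreatest_le (P := (g · = t)) (k - 1)).trans_lt (by omega)

lemma apply_ne_of_lastVisit_lt (hd : d ∉ N) (hg : IsPMPDWalkFun N d k g) (ht : t ∈ N) {m : ℕ}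
    (h1 : lastVisit g k t < m) (h2 : m ≤ k) : g m ≠ t := by
  rcases h2.lt_or_eq with h2 | rfl
  · exact Nat.findGreatest_is_greatest (P := (g · = t)) h1 (by omega)
  · exact fun h => hd (hg.apply_self ▸ h ▸ ht)

lemma exists_isRevisit_lastVisit (hd : d ∉ N) (hg : IsPMPDWalkFun N d k g) (ht : t ∈ N)
    (hmin : ∀ t' ∈ N, lastVisit g k t ≤ lastVisit g k t') :
    ∃ B, k < B ∧ IsRevisit g (lastVisit g k t) B ∧ Spans N g (lastVisit g k t) B := by
  have hB : ∃ m, k < m ∧ g m = t :=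
    ⟨lastVisit g k t + k, by have := lastVisit_pos hd hg ht; omega,
      by rw [hg.periodic, apply_lastVisit hg ht]⟩
  obtain ⟨hkB, hgB⟩ := Nat.find_spec hB
  refine ⟨Nat.find hB, hkB, ⟨(lastVisit_lt hg).trans hkB, by rw [hgB, apply_lastVisit hg ht],
    fun m h1 h2 => ?_⟩, fun t' ht' => ⟨lastVisit g k t', hmin t' ht',
      ((lastVisit_lt hg).trans hkB).le, apply_lastVisit hg ht'⟩⟩
  rw [apply_lastVisit hg ht]
  rcases Nat.lt_or_ge k m with hkm | hmk
  · exact fun h => Nat.find_min hB h2 ⟨hkm, h⟩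
  · exact apply_ne_of_lastVisit_lt hd hg ht h1 hmk

end LastVisit

section Shortcutting

variable {c : V → V → ℝ} {N : Finset V} {d : V}

lemma exists_simple_walk_le_segCost (hd : d ∉ N) (htri : ∀ x y z, c x z ≤ c x y + c y z)
    {g : ℕ → V} {σ : ℕ → ℕ} {n : ℕ} (hn : 0 < n)
    (hσ : ∀ m, 1 ≤ m → m < n + 2 → σ m < σ (m + 1)) (hσd : g (σ (n + 1)) = d)
    (hσB : g (σ (n + 2)) = g (σ 1)) (hmem : ∀ m ∈ Ioo 0 (n + 1), g (σ m) ∈ N)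
    (hinj : InjOn (g ∘ σ) (Ioo 0 (n + 1))) (hcov : ∀ t ∈ N, ∃ m ∈ Ioo 0 (n + 1), g (σ m) = t) :
    ∃ h, IsPMPDWalkFun N d (n + 1) h ∧ InjOn h (Ico 0 (n + 1)) ∧
      segCost c h 0 (n + 1) ≤ segCost c g (σ 1) (σ (n + 2)) := by
  refine ⟨depotWalk d (n + 1) (g ∘ σ),
    isPMPDWalkFun_depotWalk hd (by omega) hmem (fun r hr he => ?_) hcov,
    injOn_depotWalk hd hmem hinj, ?_⟩
  · have := hinj ⟨hr.1, by have := hr.2; omega⟩ ⟨by omega, by have := hr.2; omega⟩ he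
    omega
  rw [← segCost_add_period_s16 c _ depotWalk_periodic 1, show n + 2 = 1 + (n + 1) by omega]
  refine segCost_le_segCost_comp _ htri (by omega) (fun m h1 h2 => hσ m h1 (by omega))
    fun m h1 h2 => ?_
  rcases Nat.lt_or_ge m (n + 1) with hm | hm
  · exact depotWalk_of_lt h1 hm
  rcases hm.eq_or_lt with rfl | hm
  · rw [depotWalk_of_mod_eq_zero (Nat.mod_self _), hσd]
  · rw [show m = 1 + (n + 1) by omega, depotWalk_periodic, depotWalk_of_lt one_pos (by omega),
      comp_apply, ← hσB, show n + 2 = 1 + (n + 1) by omega]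

lemma exists_simple_walk_le_segCost_of_orderEmbedding (hd : d ∉ N)
    (htri : ∀ x y z, c x z ≤ c x y + c y z) {g : ℕ → V} {n k B : ℕ} (hn : 0 < n)
    (e : Fin n ↪o ℕ) (hek : ∀ s, e s < k) (hkB : k < B) (hgk : g k = d)
    (hgB : g B = g (e ⟨0, hn⟩)) (hmem : ∀ s, g (e s) ∈ N) (hinj : Injective (g ∘ e))
    (hcov : ∀ t ∈ N, ∃ s, g (e s) = t) :
    ∃ h, IsPMPDWalkFun N d (n + 1) h ∧ InjOn h (Ico 0 (n + 1)) ∧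
      segCost c h 0 (n + 1) ≤ segCost c g (e ⟨0, hn⟩) B := by
  set σ : ℕ → ℕ := fun m => if h : m - 1 < n then e ⟨m - 1, h⟩ else if m = n + 1 then k else B
  have hσe : ∀ m (h : m - 1 < n), σ m = e ⟨m - 1, h⟩ := fun m h => dif_pos h
  have hσk : σ (n + 1) = k := by simp [σ]
  have hσB : σ (n + 2) = B := by simp [σ]
  have hσ1 : σ 1 = e ⟨0, hn⟩ := hσe 1 hn
  have hσ : ∀ m, 1 ≤ m → m < n + 2 → σ m < σ (m + 1) := fun m h1 h2 => by
    rcases Nat.lt_or_ge m n with hm | hm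
    · rw [hσe m (by omega), hσe (m + 1) (by omega)]
      exact e.strictMono (Fin.mk_lt_mk.2 (by omega))
    rcases hm.eq_or_lt with rfl | hm
    · rw [hσe n (by omega), hσk]
      exact hek _
    · rwa [show m = n + 1 by omega, hσk, hσB]
  have hinjσ : InjOn (g ∘ σ) (Ioo 0 (n + 1)) := fun x hx y hy hxy => by
    simp only [mem_Ioo] at hx hy
    simp only [comp_apply, hσe x (by omega), hσe y (by omega)] at hxy
    have := congrArg Fin.val (hinj hxy)
    simp only at this
    omega
  have hcovσ : ∀ t ∈ N, ∃ m ∈ Ioo 0 (n + 1), g (σ m) = t := fun t ht => by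
    obtain ⟨s, rfl⟩ := hcov t ht
    refine ⟨s + 1, ⟨s.succ_pos, by omega⟩, ?_⟩
    rw [hσe (s + 1) (by omega)]
    simp only [Nat.add_sub_cancel, Fin.eta]
  have := exists_simple_walk_le_segCost hd htri hn hσ (by rw [hσk, hgk])
    (by rw [hσB, hσ1, hgB]) (fun m hm => by rw [hσe m (by grind)]; exact hmem _) hinjσ hcovσ
  rwa [hσ1, hσB] at this

end Shortcutting

section LowerBound

variable [DecidableEq V] {c : V → V → ℝ} {N : Finset V} {d : V}

theorem exists_simple_walk_le (hd : d ∉ N) (htri : ∀ x y z, c x z ≤ c x y + c y z) {k : ℕ}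
    {g : ℕ → V} {r : ℝ} (hg : IsPMPDWalkFun N d k g) (hr : IsGreatest (revCosts c N k g) r) :
    ∃ h, IsPMPDWalkFun N d (N.card + 1) h ∧ InjOn h (Ico 0 (N.card + 1)) ∧
      segCost c h 0 (N.card + 1) ≤ r := by
  have hn : 0 < N.card := Finset.card_pos.2 ⟨_, hg.apply_one_mem⟩
  have hI : (N.image (lastVisit g k)).card = N.card := Finset.card_image_of_injOn
    fun t ht t' ht' h => by rw [← apply_lastVisit hg ht, ← apply_lastVisit hg ht', h]
  set e := (N.image (lastVisit g k)).orderEmbOfFin hI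
  have he : ∀ t ∈ N, ∃ s, e s = lastVisit g k t := fun t ht => by
    rw [← Set.mem_range, Finset.range_orderEmbOfFin]
    exact Finset.mem_image_of_mem _ ht
  have hge : ∀ s, g (e s) ∈ N ∧ lastVisit g k (g (e s)) = e s := fun s => by
    obtain ⟨t, ht, hts⟩ := Finset.mem_image.1 (Finset.orderEmbOfFin_mem _ hI s)
    rw [← hts, apply_lastVisit hg ht]
    exact ⟨ht, rfl⟩
  obtain ⟨B, hkB, hrev, hspans⟩ := exists_isRevisit_lastVisit hd hg (hge ⟨0, hn⟩).1 fun t ht => by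
    obtain ⟨s, hs⟩ := he t ht
    rw [(hge _).2, ← hs]
    exact e.monotone (show (⟨0, hn⟩ : Fin N.card) ≤ s from Nat.zero_le _)
  rw [(hge _).2] at hrev hspans
  have hek : ∀ s, e s < k := fun s => (hge s).2 ▸ lastVisit_lt hg
  obtain ⟨h, hh, hinj, hle⟩ := exists_simple_walk_le_segCost_of_orderEmbedding (c := c) hd htri
    hn e hek hkB hg.apply_self hrev.2.1 (fun s => (hge s).1)
    (fun s s' hss' => e.injective ((hge s).2.symm.trans ((congrArg _ hss').trans (hge s').2)))
    fun t ht => (he t ht).imp fun s hs => by rw [hs, apply_lastVisit hg ht]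
  exact ⟨h, hh, hinj, hle.trans (hr.2 ⟨_, B, hek _, (hge _).1, hrev, hspans, rfl⟩)⟩

end LowerBound

end

theorem O1_optimal_general {V : Type*} [DecidableEq V]
    (c : V → V → ℝ) (N : Finset V) (dV : V) (hd : dV ∉ N) (hn : 3 ≤ N.card)
    (htri : ∀ x y z, c x z ≤ c x y + c y z)
    (p k : ℕ) (hp : 1 ≤ p) (hk : k = p * N.card + 1)
    (RD : ℕ → ℝ)
    (hRDk : IsLeast (pmpdRevTimes c N dV k) (RD k))
    (hRD1 : IsLeast (pmpdRevTimes c N dV (N.card + 1)) (RD (N.card + 1)))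
    (f₁ : ℕ → V) (hf₁ : IsPMPDWalkFun N dV (N.card + 1) f₁)
    (hopt : IsGreatest (revCosts c N (N.card + 1) f₁) (RD (N.card + 1)))
    (honce : ∀ t ∈ N, ∃! i, i < N.card + 1 ∧ f₁ i = t) :
    (∃ f : ℕ → V,
      (∀ i, 1 ≤ i → i ≤ k - 1 → f i = f₁ ((i - 1) % N.card + 1)) ∧
      IsPMPDWalkFun N dV k f ∧
      IsGreatest (revCosts c N k f) (RD (N.card + 1))) ∧
    RD k = RD (N.card + 1) := by
  subst hk
  have hinj₁ := hf₁.injOn_Ico honce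
  have hRD : RD (N.card + 1) = segCost c f₁ 0 (N.card + 1) :=
    hopt.unique (hf₁.isGreatest_revCosts c hinj₁)
  have hwalk := isPMPDWalkFun_concatWalk hd hf₁ hinj₁ (by omega) hp
  have hmax := hRD ▸ isGreatest_revCosts_concatWalk hd htri hf₁ hinj₁ (by omega) hp
  refine ⟨⟨concatWalk dV f₁ N.card p, fun i h1 h2 => depotWalk_of_lt h1 (by omega), hwalk, hmax⟩,
    le_antisymm (hRDk.2 ⟨_, hwalk, hmax⟩) ?_⟩
  obtain ⟨g, hg, hgmax⟩ := hRDk.1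
  obtain ⟨h, hh, hinj, hle⟩ := exists_simple_walk_le hd htri hg hgmax
  exact (hRD1.2 ⟨h, hh, hh.isGreatest_revCosts c hinj⟩).trans hle

/-- Theorem 2 of the paper: for `k = pn+1`, if the optimal
`(n+1)`-visit PMP-D walk `WD*(n+1)` visits each target exactly once and its depot can
be shortcut (the targets adjacent to the depot differ), then the walk obtained by
concatenating (a rotation of) `WD*(n+1)` with `p−1` copies of its depot-shortcut
`n`-cycle — i.e. the walk `(d, u_1, ..., u_n, u_1, ..., u_n, ..., u_1, ..., u_n, d)` —
is a feasible PMP-D walk with `k` visits whose revisit time equals `RD*(n+1)`; hence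
`RD*(pn+1) = RD*(n+1)`. -/
theorem O1_optimal {V : Type*} [DecidableEq V]
    (c : V → V → ℝ) (N : Finset V) (dV : V) (hd : dV ∉ N) (hn : 3 ≤ N.card)
    (hsymm : ∀ x y, c x y = c y x) (hnonneg : ∀ x y, 0 ≤ c x y)
    (htri : ∀ x y z, c x z ≤ c x y + c y z)
    (p k : ℕ) (hp : 1 ≤ p) (hk : k = p * N.card + 1)
    (RD : ℕ → ℝ)
    (hRDk : IsLeast (pmpdRevTimes c N dV k) (RD k))
    (hRD1 : IsLeast (pmpdRevTimes c N dV (N.card + 1)) (RD (N.card + 1)))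
    (f₁ : ℕ → V) (hf₁ : IsPMPDWalkFun N dV (N.card + 1) f₁)
    (hopt : IsGreatest (revCosts c N (N.card + 1) f₁) (RD (N.card + 1)))
    (honce : ∀ t ∈ N, ∃! i, i < N.card + 1 ∧ f₁ i = t)
    (hshort : f₁ 1 ≠ f₁ N.card) :
    (∃ f : ℕ → V,
      (∀ i, 1 ≤ i → i ≤ k - 1 → f i = f₁ ((i - 1) % N.card + 1)) ∧
      IsPMPDWalkFun N dV k f ∧
      IsGreatest (revCosts c N k f) (RD (N.card + 1))) ∧
    RD k = RD (N.card + 1) :=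
  O1_optimal_general c N dV hd hn htri p k hp hk RD hRDk hRD1 f₁ hf₁ hopt honce
end

section
/- Let W_a and W_b be cyclic walks over the n targets (possibly with depot), each with at most 2n−1 visits and each containing some common target t exactly once, and let W_s be a common shortcut walk of both, also containing t exactly once. Then any cyclic concatenation of copies of W_a, W_b, and W_s (all rotated to start at t) in which no copy of W_a is adjacent to a copy of W_b has revisit time equal to max(R(W_a), R(W_b)). -/
/-! A walk whose terminus `t` occurs once has revisit time equal to the cost of its closed tour:
a revisit sequence ends at latest one period after it starts, and costs are nonnegative.
In the concatenation, a revisit sequence starting at a visit `u` of a block `B₁` ends at latest at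
the first visit of `u` in the next block `B₂`, so it costs at most the closed tour
`u, rest of B₁, part of B₂ before u, u`. Cyclically adjacent blocks are comparable for the
sublist order (`W_s` is a shortcut of both and `W_a`, `W_b` are never adjacent), and by the
triangle inequality that tour costs at most the closed tour of the larger block, hence at most
`max(R(W_a), R(W_b))`. -/

namespace List

variable {α : Type*}

theorem exists_eq_cons_of_head?_eq_of_count_eq_one [BEq α] [LawfulBEq α] {L : List α} {t : α}
    (hhead : L.head? = some t) (hcount : L.count t = 1) : ∃ l, L = t :: l ∧ t ∉ l := by
  obtain _ | ⟨a, l⟩ := L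
  · simp at hhead
  · obtain rfl : a = t := by simpa using hhead
    exact ⟨l, rfl, count_eq_zero.mp (by simpa using hcount)⟩

theorem sublist_of_cons_sublist_append_cons {Y Z W : List α} {u : α} (hZ : u ∉ Z)
    (h : (u :: Y).Sublist (Z ++ u :: W)) : Y.Sublist W := by
  obtain ⟨_ | ⟨a, l₁⟩, l₂, hl, h₁, h₂⟩ := sublist_append_iff.mp h
  · rw [nil_append] at hl
    exact cons_sublist_cons.mp (hl ▸ h₂)
  · rw [cons_append, cons.injEq] at hl
    exact absurd (h₁.subset (hl.1 ▸ mem_cons_self)) hZ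

theorem sublist_of_append_singleton_sublist_append_cons {X Y Z : List α} {u : α}
    (hY : u ∉ Y) (h : (Z ++ [u]).Sublist (X ++ u :: Y)) : Z.Sublist X := by
  have := sublist_of_cons_sublist_append_cons (Y := Z.reverse) (Z := Y.reverse)
    (W := X.reverse) (by simpa using hY) (by simpa using h.reverse)
  simpa using this.reverse

theorem sublist_or_sublist_of_common_sublist {A B S X Y : List α} (hSA : S.Sublist A)
    (hSB : S.Sublist B) (hX : X = A ∨ X = B ∨ X = S) (hY : Y = A ∨ Y = B ∨ Y = S)
    (hXY : ¬(X = A ∧ Y = B) ∧ ¬(X = B ∧ Y = A)) : X.Sublist Y ∨ Y.Sublist X := by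
  rcases hX with rfl | rfl | rfl <;> rcases hY with rfl | rfl | rfl <;> simp_all

theorem exists_append_cons_of_lt_length_flatten {bs : List (List α)} {i : ℕ}
    (hi : i < bs.flatten.length) : ∃ pre B suf, bs = pre ++ B :: suf ∧
      pre.flatten.length ≤ i ∧ i < pre.flatten.length + B.length := by
  induction bs generalizing i with
  | nil => simp at hi
  | cons B bs ih =>
    rw [flatten_cons, length_append] at hi
    by_cases hiB : i < B.length
    · exact ⟨[], B, bs, rfl, by simp, by simpa using hiB⟩
    · obtain ⟨pre, B', suf, rfl, h₁, h₂⟩ := ih (i := i - B.length) (by omega)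
      refine ⟨B :: pre, B', suf, rfl, ?_, ?_⟩ <;>
        simp only [flatten_cons, length_append] <;> omega

theorem exists_append_append_cons_cons {bs pre suf : List α} {B : α}
    (h : bs = pre ++ B :: suf) : ∃ B' rest, bs ++ bs = pre ++ B :: B' :: rest := by
  cases hs : suf ++ bs with
  | nil => simp [h] at hs
  | cons B' rest => exact ⟨B', rest, by rw [← hs, h]; simp⟩

end List

section

variable {V : Type*}

def pathCost (c : V → V → ℝ) (x : V) : List V → V → ℝ
  | [], y => c x y
  | a :: l, y => c x a + pathCost c a l y

def cycleCost (c : V → V → ℝ) : List V → ℝ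
  | [] => 0
  | x :: l => pathCost c x l x

def ReadsAt (f : ℕ → V) (i : ℕ) (l : List V) : Prop :=
  ∀ r (hr : r < l.length), f (i + r) = l[r]

section Costs

variable {c : V → V → ℝ}

theorem pathCost_append_cons (l₁ : List V) (x a : V) (l₂ : List V) (y : V) :
    pathCost c x (l₁ ++ a :: l₂) y = pathCost c x l₁ a + pathCost c a l₂ y := by
  induction l₁ generalizing x with
  | nil => rfl
  | cons b l ih => simp only [List.cons_append, pathCost, ih, add_assoc]

theorem cycleCost_append_cons (X : List V) (u : V) (Y : List V) :
    cycleCost c (X ++ u :: Y) = cycleCost c (u :: (Y ++ X)) := by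
  cases X with
  | nil => simp
  | cons x X => simp only [List.cons_append, cycleCost, pathCost_append_cons, add_comm]

theorem pathCost_le_cons (htri : ∀ x y z, c x z ≤ c x y + c y z)
    (l : List V) (x a y : V) :
    pathCost c x l y ≤ c x a + pathCost c a l y := by
  cases l with
  | nil => exact htri x a y
  | cons b l =>
    simp only [pathCost, ← add_assoc]
    exact add_le_add_left (htri x a b) _

theorem pathCost_le_of_sublist (htri : ∀ x y z, c x z ≤ c x y + c y z)
    {l₁ l₂ : List V} (h : l₁.Sublist l₂) (x y : V) :
    pathCost c x l₁ y ≤ pathCost c x l₂ y := by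
  induction h generalizing x with
  | slnil => exact le_rfl
  | cons a _ ih => exact (ih x).trans (pathCost_le_cons htri _ x a y)
  | cons_cons a _ ih => exact add_le_add_right (ih a) _

theorem cycleCost_cons_le_of_sublist (htri : ∀ x y z, c x z ≤ c x y + c y z)
    {l₁ l₂ : List V} (u : V) (h : l₁.Sublist l₂) :
    cycleCost c (u :: l₁) ≤ cycleCost c (u :: l₂) :=
  pathCost_le_of_sublist htri h u u

theorem cycleCost_le_max_of_sublist_or_sublist
    (htri : ∀ x y z, c x z ≤ c x y + c y z) {B₁ B₂ X Y Z W : List V} {u : V}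
    (h₁ : B₁ = X ++ u :: Y) (hY : u ∉ Y) (h₂ : B₂ = Z ++ u :: W) (hZ : u ∉ Z)
    (hcomp : B₁.Sublist B₂ ∨ B₂.Sublist B₁) :
    cycleCost c (u :: (Y ++ Z)) ≤ max (cycleCost c B₁) (cycleCost c B₂) := by
  subst h₁ h₂
  rcases hcomp with h | h
  · have hYW : Y.Sublist W :=
      List.sublist_of_cons_sublist_append_cons hZ ((List.sublist_append_right X _).trans h)
    calc cycleCost c (u :: (Y ++ Z)) ≤ cycleCost c (u :: (W ++ Z)) :=
          cycleCost_cons_le_of_sublist htri u (hYW.append_right Z)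
      _ = cycleCost c (Z ++ u :: W) := (cycleCost_append_cons Z u W).symm
      _ ≤ _ := le_max_right _ _
  · have hZX : Z.Sublist X := List.sublist_of_append_singleton_sublist_append_cons hY
      (((List.singleton_sublist.mpr List.mem_cons_self).append_left Z).trans h)
    calc cycleCost c (u :: (Y ++ Z)) ≤ cycleCost c (u :: (Y ++ X)) :=
          cycleCost_cons_le_of_sublist htri u (hZX.append_left Y)
      _ = cycleCost c (X ++ u :: Y) := (cycleCost_append_cons X u Y).symm
      _ ≤ _ := le_max_left _ _

end Costs

namespace ReadsAt

variable {f : ℕ → V} {i : ℕ}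

theorem of_getD {l : List V} {d : V} (h : ∀ r, r < l.length → f r = l.getD r d) :
    ReadsAt f 0 l := fun r hr => by rw [zero_add, h r hr, List.getD_eq_getElem _ _ hr]

theorem of_infix {L A M B : List V} (h : ReadsAt f i L) (hL : A ++ M ++ B = L) :
    ReadsAt f (i + A.length) M := fun r hr => by
  subst hL
  have := h (A.length + r) (by simp only [List.length_append]; omega)
  rw [← add_assoc, List.getElem_append_left (by simp only [List.length_append]; omega),
    List.getElem_append_right (by omega)] at this
  simpa only [Nat.add_sub_cancel_left] using this

theorem left {l₁ l₂ : List V} (h : ReadsAt f i (l₁ ++ l₂)) : ReadsAt f i l₁ :=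
  h.of_infix (A := []) (B := l₂) rfl

theorem right {l₁ l₂ : List V} (h : ReadsAt f i (l₁ ++ l₂)) : ReadsAt f (i + l₁.length) l₂ :=
  h.of_infix (B := []) (List.append_nil _)

theorem append {l₁ l₂ : List V} (h₁ : ReadsAt f i l₁) (h₂ : ReadsAt f (i + l₁.length) l₂) :
    ReadsAt f i (l₁ ++ l₂) := fun r hr => by
  by_cases hr₁ : r < l₁.length
  · rw [List.getElem_append_left hr₁, h₁ r hr₁]
  · have := h₂ (r - l₁.length) (by simp only [List.length_append] at hr; omega)
    rw [List.getElem_append_right (by omega), ← this, add_assoc, Nat.add_sub_cancel' (by omega)]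

theorem add_period {l : List V} {p : ℕ} (hper : ∀ n, f (n + p) = f n) (h : ReadsAt f i l) :
    ReadsAt f (i + p) l := fun r hr => by rw [add_right_comm, hper, h r hr]

theorem exists_of_mem {l : List V} {x : V} (h : ReadsAt f i l) (hx : x ∈ l) :
    ∃ r < l.length, f (i + r) = x := by
  obtain ⟨r, hr, rfl⟩ := List.getElem_of_mem hx
  exact ⟨r, hr, h r hr⟩

theorem eq_of_apply_eq_head {t : V} {l : List V} (h : ReadsAt f i (t :: l)) (ht : t ∉ l)
    {m : ℕ} (him : i ≤ m) (hm : m < i + l.length + 1) (hfm : f m = t) : m = i := by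
  by_contra hne
  obtain ⟨k, rfl⟩ : ∃ k, m = i + (k + 1) := ⟨m - i - 1, by omega⟩
  have hk : k < l.length := by omega
  have := h (k + 1) (by simpa using hk)
  rw [List.getElem_cons_succ, hfm] at this
  exact ht (this ▸ List.getElem_mem hk)

end ReadsAt

section SegCost

variable {c : V → V → ℝ} {f : ℕ → V}

theorem segCost_mono (hnn : ∀ x y, 0 ≤ c x y) {i j j' : ℕ} (h : j ≤ j') :
    segCost c f i j ≤ segCost c f i j' :=
  Finset.sum_le_sum_of_subset_of_nonneg (Finset.range_subset_range.mpr (by omega))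
    fun _ _ _ => hnn _ _

theorem segCost_eq_add {i j : ℕ} (h : i < j) :
    segCost c f i j = c (f i) (f (i + 1)) + segCost c f (i + 1) j := by
  rw [segCost, segCost, show j - i = j - (i + 1) + 1 by omega, Finset.sum_range_succ', add_comm]
  simp only [add_zero, add_assoc, add_comm 1]

theorem segCost_eq_pathCost {i : ℕ} {x y : V} {l : List V} (h : ReadsAt f i (x :: l ++ [y])) :
    segCost c f i (i + l.length + 1) = pathCost c x l y := by
  induction l generalizing i x with
  | nil =>
    have h₀ := h 0 (by simp)
    have h₁ := h 1 (by simp)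
    simp_all [segCost, pathCost]
  | cons a l ih =>
    have hx : f i = x := h 0 (by simp)
    have htail : ReadsAt f (i + 1) (a :: l ++ [y]) := ReadsAt.right (l₁ := [x]) h
    have ha : f (i + 1) = a := by simpa using htail 0 (by simp)
    rw [segCost_eq_add (by omega), List.length_cons, ← add_assoc, add_right_comm i, ih htail,
      hx, ha]
    rfl

end SegCost

theorem IsRevisit.le_of_apply_eq {f : ℕ → V} {i j e : ℕ} (h : IsRevisit f i j) (hie : i < e)
    (he : f e = f i) : j ≤ e :=
  not_lt.mp fun hej => h.2.2 e hie hej he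

theorem exists_split_segCost_le_cycleCost {c : V → V → ℝ} (hnn : ∀ x y, 0 ≤ c x y)
    {f : ℕ → V} {o i j : ℕ} {t : V} {l₁ B₁ B₂ : List V}
    (hf : ReadsAt f o (B₁ ++ B₂)) (hB₁ : B₁ = t :: l₁) (htl : t ∉ l₁) (hoi : o ≤ i)
    (hi : i < o + B₁.length) (hrev : IsRevisit f i j) (hspan : ∃ m, i ≤ m ∧ m ≤ j ∧ f m = t)
    (hu : f i ∈ B₂) :
    ∃ X Y Z W, B₁ = X ++ f i :: Y ∧ f i ∉ Y ∧ B₂ = Z ++ f i :: W ∧ f i ∉ Z ∧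
      segCost c f i j ≤ cycleCost c (f i :: (Y ++ Z)) := by
  have hd : i - o < B₁.length := by omega
  have hXY : B₁ = B₁.take (i - o) ++ f i :: B₁.drop (i - o + 1) := by
    have := hf.left (i - o) hd
    rw [Nat.add_sub_cancel' hoi] at this
    rw [this, ← List.drop_eq_getElem_cons, List.take_append_drop]
  set X := B₁.take (i - o)
  set Y := B₁.drop (i - o + 1)
  obtain ⟨Z, W, hZW, hZ⟩ := List.eq_append_cons_of_mem hu
  have hX : X.length = i - o := List.length_take_of_le hd.le
  have hread : ReadsAt f i (f i :: (Y ++ Z) ++ [f i]) := by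
    have h := hf.of_infix (A := X) (M := f i :: (Y ++ Z) ++ [f i]) (B := W)
      (by rw [hXY, hZW]; simp)
    rwa [hX, Nat.add_sub_cancel' hoi] at h
  -- A second visit of `f i` inside `B₁` would end the revisit inside `B₁`, which then could
  -- only visit `t` if it started at `t` itself.
  have hY : f i ∉ Y := by
    intro hmem
    obtain ⟨r, hr, hfr⟩ :=
      (hread.of_infix (A := [f i]) (B := Z ++ [f i]) (by simp)).exists_of_mem hmem
    have hYlen : Y.length = B₁.length - (i - o + 1) := List.length_drop
    have hjm : j ≤ i + 1 + r := hrev.le_of_apply_eq (by omega) (by simpa using hfr)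
    obtain ⟨m, him, hmj, hfm⟩ := hspan
    have hmo : m = o := (hB₁ ▸ hf.left : ReadsAt f o (t :: l₁)).eq_of_apply_eq_head
      htl (by omega) (by rw [hB₁, List.length_cons] at hYlen; omega) hfm
    have hio : i - o = 0 := by omega
    rw [show f i = t by rw [← hfm]; congr 1; omega] at hmem
    exact htl (by simpa [Y, hio, hB₁] using hmem)
  set e := i + (Y ++ Z).length + 1
  have he : f e = f i := by
    simpa [e, add_assoc] using hread.right 0
  refine ⟨X, Y, Z, W, hXY, hY, hZW, hZ, ?_⟩
  calc segCost c f i j ≤ segCost c f i e :=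
        segCost_mono hnn (hrev.le_of_apply_eq (by omega) he)
    _ = cycleCost c (f i :: (Y ++ Z)) := segCost_eq_pathCost hread

section Concatenation

variable {c : V → V → ℝ} {N : Finset V} {t : V} {bs : List (List V)} {f : ℕ → V}

-- In `bs ++ bs` every block of `bs` is followed by its cyclic successor.
theorem ReadsAt.append_of_append_cons_cons (hper : ∀ n, f (n + bs.flatten.length) = f n)
    (hread : ReadsAt f 0 bs.flatten) {pre rest : List (List V)} {B B' : List V}
    (h : bs ++ bs = pre ++ B :: B' :: rest) : ReadsAt f pre.flatten.length (B ++ B') := by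
  have hread₂ : ReadsAt f 0 (bs ++ bs).flatten := by
    rw [List.flatten_append]
    exact hread.append (by simpa using hread.add_period hper)
  simpa using
    hread₂.of_infix (A := pre.flatten) (M := B ++ B') (B := rest.flatten) (by rw [h]; simp)

theorem cycleCost_mem_revCosts_of_readsAt (htN : t ∈ N) {l : List V} (htl : t ∉ l)
    (hcov : ∀ w ∈ N, w ∈ t :: l) {p o : ℕ} (ho : o < p) (hf : ReadsAt f o (t :: l ++ [t])) :
    cycleCost c (t :: l) ∈ revCosts c N p f := by
  have hread : ReadsAt f o (t :: l) := hf.left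
  have hfo : f o = t := by simpa using hread 0
  have hend : f (o + l.length + 1) = t := by simpa [add_assoc] using hf.right 0
  refine ⟨o, o + l.length + 1, ho, hfo ▸ htN, ⟨by omega, by rw [hend, hfo], ?_⟩, ?_,
    (segCost_eq_pathCost hf).symm⟩
  · exact fun m hom hm hfm => hom.ne' (hread.eq_of_apply_eq_head htl hom.le hm (hfm.trans hfo))
  · intro w hw
    obtain ⟨r, hr, hfr⟩ := hread.exists_of_mem (hcov w hw)
    exact ⟨o + r, by omega, by simp only [List.length_cons] at hr; omega, hfr⟩

theorem cycleCost_mem_revCosts (hper : ∀ n, f (n + bs.flatten.length) = f n)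
    (hread : ReadsAt f 0 bs.flatten) (hblock : ∀ B ∈ bs, ∃ l, B = t :: l ∧ t ∉ l)
    (hcov : ∀ B ∈ bs, ∀ w ∈ N, w ∈ B) (htN : t ∈ N) {B : List V} (hB : B ∈ bs) :
    cycleCost c B ∈ revCosts c N bs.flatten.length f := by
  obtain ⟨pre, suf, hbs⟩ := List.append_of_mem hB
  obtain ⟨B', rest, hbs₂⟩ := List.exists_append_append_cons_cons hbs
  obtain ⟨l, rfl, htl⟩ := hblock _ hB
  have hB' : B' ∈ bs ++ bs := by rw [hbs₂]; simp
  obtain ⟨l', rfl, -⟩ := hblock B' (by simpa using hB')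
  have hlen : pre.flatten.length + (l.length + 1) ≤ bs.flatten.length := by
    rw [hbs]; simp
  have hf := (ReadsAt.append_of_append_cons_cons hper hread hbs₂).of_infix (A := [])
    (M := t :: l ++ [t]) (B := l') (by simp)
  rw [List.length_nil, add_zero] at hf
  exact cycleCost_mem_revCosts_of_readsAt htN htl (hcov _ hB) (by omega) hf

theorem le_of_mem_revCosts (hnn : ∀ x y, 0 ≤ c x y) (htri : ∀ x y z, c x z ≤ c x y + c y z)
    (hper : ∀ n, f (n + bs.flatten.length) = f n) (hread : ReadsAt f 0 bs.flatten)
    (hblock : ∀ B ∈ bs, ∃ l, B = t :: l ∧ t ∉ l) (hcov : ∀ B ∈ bs, ∀ w ∈ N, w ∈ B) (htN : t ∈ N)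
    (hcomp : (bs ++ bs).IsChain fun X Y => X.Sublist Y ∨ Y.Sublist X) {M : ℝ}
    (hM : ∀ B ∈ bs, cycleCost c B ≤ M) : ∀ x ∈ revCosts c N bs.flatten.length f, x ≤ M := by
  rintro x ⟨i, j, hi, hiN, hrev, hspan, rfl⟩
  obtain ⟨pre, B₁, suf, hbs, hoi, hio⟩ := List.exists_append_cons_of_lt_length_flatten hi
  obtain ⟨B₂, rest, hbs₂⟩ := List.exists_append_append_cons_cons hbs
  have hB₁ : B₁ ∈ bs := by simp [hbs]
  have hB₂ : B₂ ∈ bs := by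
    have : B₂ ∈ bs ++ bs := by rw [hbs₂]; simp
    simpa using this
  obtain ⟨l₁, hl₁, htl⟩ := hblock B₁ hB₁
  obtain ⟨X, Y, Z, W, hXY, hY, hZW, hZ, hle⟩ := exists_split_segCost_le_cycleCost hnn
    (ReadsAt.append_of_append_cons_cons hper hread hbs₂) hl₁ htl hoi hio hrev (hspan t htN)
    (hcov B₂ hB₂ _ hiN)
  calc segCost c f i j ≤ cycleCost c (f i :: (Y ++ Z)) := hle
    _ ≤ max (cycleCost c B₁) (cycleCost c B₂) := cycleCost_le_max_of_sublist_or_sublist htri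
        hXY hY hZW hZ (List.isChain_iff_forall_rel_of_append_cons_cons.mp hcomp hbs₂)
    _ ≤ M := max_le (hM B₁ hB₁) (hM B₂ hB₂)

theorem isGreatest_revCosts_cycleCost (hnn : ∀ x y, 0 ≤ c x y)
    (htri : ∀ x y z, c x z ≤ c x y + c y z) {l : List V} (htl : t ∉ l)
    (hcov : ∀ w ∈ N, w ∈ t :: l) (htN : t ∈ N) (hper : ∀ n, f (n + (t :: l).length) = f n)
    (hread : ReadsAt f 0 (t :: l)) :
    IsGreatest (revCosts c N (t :: l).length f) (cycleCost c (t :: l)) := by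
  rw [← List.flatten_singleton (l := t :: l)] at hper hread
  have hblock : ∀ B ∈ [t :: l], ∃ l', B = t :: l' ∧ t ∉ l' := by simpa using htl
  have hcov' : ∀ B ∈ [t :: l], ∀ w ∈ N, w ∈ B := by simpa using hcov
  have hmem := cycleCost_mem_revCosts (c := c) hper hread hblock hcov' htN
    (List.mem_singleton_self _)
  have hle := le_of_mem_revCosts hnn htri hper hread hblock hcov' htN (by simp)
    (M := cycleCost c (t :: l)) (by simp)
  rw [List.flatten_singleton] at hmem hle
  exact ⟨hmem, hle⟩

end Concatenation

end

theorem concat_three_walks_revisit_time_general {V : Type*} [DecidableEq V]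
    (c : V → V → ℝ) (N : Finset V) (hnonneg : ∀ x y, 0 ≤ c x y)
    (htri : ∀ x y z, c x z ≤ c x y + c y z)
    (t : V) (ht : t ∈ N)
    (La Lb Ls : List V)
    (haHead : La.head? = some t) (hbHead : Lb.head? = some t) (hsHead : Ls.head? = some t)
    (haOnce : La.count t = 1) (hbOnce : Lb.count t = 1) (hsOnce : Ls.count t = 1)
    (haCov : ∀ u ∈ N, u ∈ La) (hbCov : ∀ u ∈ N, u ∈ Lb) (hsCov : ∀ u ∈ N, u ∈ Ls)
    (hsa : Ls.Sublist La) (hsb : Ls.Sublist Lb)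
    (bs : List (List V)) (hbs : ∀ L ∈ bs, L = La ∨ L = Lb ∨ L = Ls)
    (hadj : bs.Chain' fun X Y => ¬(X = La ∧ Y = Lb) ∧ ¬(X = Lb ∧ Y = La))
    (hwrap : ¬(bs.getLast? = some La ∧ bs.head? = some Lb) ∧
      ¬(bs.getLast? = some Lb ∧ bs.head? = some La))
    (haMem : La ∈ bs) (hbMem : Lb ∈ bs)
    (fa fb f : ℕ → V)
    (hfa : (∀ i, fa (i + La.length) = fa i) ∧ ∀ i, i < La.length → fa i = La.getD i t)
    (hfb : (∀ i, fb (i + Lb.length) = fb i) ∧ ∀ i, i < Lb.length → fb i = Lb.getD i t)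
    (hfc : (∀ i, f (i + bs.flatten.length) = f i) ∧
      ∀ i, i < bs.flatten.length → f i = bs.flatten.getD i t)
    (Ra Rb : ℝ)
    (hRa : IsGreatest (revCosts c N La.length fa) Ra)
    (hRb : IsGreatest (revCosts c N Lb.length fb) Rb) :
    IsGreatest (revCosts c N bs.flatten.length f) (max Ra Rb) := by
  obtain ⟨la, rfl, hla⟩ := List.exists_eq_cons_of_head?_eq_of_count_eq_one haHead haOnce
  obtain ⟨lb, rfl, hlb⟩ := List.exists_eq_cons_of_head?_eq_of_count_eq_one hbHead hbOnce
  obtain ⟨ls, rfl, hls⟩ := List.exists_eq_cons_of_head?_eq_of_count_eq_one hsHead hsOnce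
  obtain rfl := hRa.unique <| isGreatest_revCosts_cycleCost hnonneg htri hla haCov ht hfa.1
    (ReadsAt.of_getD hfa.2)
  obtain rfl := hRb.unique <| isGreatest_revCosts_cycleCost hnonneg htri hlb hbCov ht hfb.1
    (ReadsAt.of_getD hfb.2)
  have hblock : ∀ B ∈ bs, ∃ l, B = t :: l ∧ t ∉ l := fun B hB => by
    rcases hbs B hB with rfl | rfl | rfl
    exacts [⟨la, rfl, hla⟩, ⟨lb, rfl, hlb⟩, ⟨ls, rfl, hls⟩]
  have hcov : ∀ B ∈ bs, ∀ w ∈ N, w ∈ B := fun B hB => by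
    rcases hbs B hB with rfl | rfl | rfl <;> assumption
  have hread := ReadsAt.of_getD hfc.2
  have hadj₂ := (List.isChain_append (l₁ := bs) (l₂ := bs)).mpr ⟨hadj, hadj, fun X hX Y hY =>
    ⟨fun h => hwrap.1 ⟨h.1 ▸ hX, h.2 ▸ hY⟩, fun h => hwrap.2 ⟨h.1 ▸ hX, h.2 ▸ hY⟩⟩⟩
  refine ⟨?_, le_of_mem_revCosts hnonneg htri hfc.1 hread hblock hcov ht ?_ ?_⟩
  · rcases max_choice (cycleCost c (t :: la)) (cycleCost c (t :: lb)) with h | h <;> rw [h]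
    exacts [cycleCost_mem_revCosts hfc.1 hread hblock hcov ht haMem,
      cycleCost_mem_revCosts hfc.1 hread hblock hcov ht hbMem]
  · exact hadj₂.imp_of_mem_imp fun X Y hX hY => List.sublist_or_sublist_of_common_sublist hsa hsb
      (hbs X (by simpa using hX)) (hbs Y (by simpa using hY))
  · intro B hB
    rcases hbs B hB with rfl | rfl | rfl
    · exact le_max_left _ _
    · exact le_max_right _ _
    · exact (cycleCost_cons_le_of_sublist htri t (List.cons_sublist_cons.mp hsa)).trans
        (le_max_left _ _)

/-- Lemma 4, item 2: let `W_a`, `W_b` be cyclic walks (lists `La`, `Lb`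
rotated to start at a common target `t` occurring exactly once in each) with at most
`2n−1` visits, and `W_s` (list `Ls`) a common shortcut of both also starting at `t` and
containing it once. Any cyclic concatenation of copies of `La`, `Lb`, `Ls` in which no
copy of `La` is (cyclically) adjacent to a copy of `Lb`, and in which both `La` and
`Lb` appear, has revisit time `max(R(W_a), R(W_b))`. -/
theorem concat_three_walks_revisit_time {V : Type*} [DecidableEq V]
    (c : V → V → ℝ) (N : Finset V) (dV : V) (hd : dV ∉ N) (hn : 3 ≤ N.card)
    (hsymm : ∀ x y, c x y = c y x) (hnonneg : ∀ x y, 0 ≤ c x y)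
    (htri : ∀ x y z, c x z ≤ c x y + c y z)
    (t : V) (ht : t ∈ N)
    (La Lb Ls : List V)
    (haHead : La.head? = some t) (hbHead : Lb.head? = some t) (hsHead : Ls.head? = some t)
    (haOnce : La.count t = 1) (hbOnce : Lb.count t = 1) (hsOnce : Ls.count t = 1)
    (haLen : La.length ≤ 2 * N.card - 1) (hbLen : Lb.length ≤ 2 * N.card - 1)
    (haElem : ∀ x ∈ La, x ∈ N ∨ x = dV) (hbElem : ∀ x ∈ Lb, x ∈ N ∨ x = dV)
    (haCov : ∀ u ∈ N, u ∈ La) (hbCov : ∀ u ∈ N, u ∈ Lb) (hsCov : ∀ u ∈ N, u ∈ Ls)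
    (haChain : (La ++ [t]).Chain' (· ≠ ·)) (hbChain : (Lb ++ [t]).Chain' (· ≠ ·))
    (hsChain : (Ls ++ [t]).Chain' (· ≠ ·))
    (hsa : Ls.Sublist La) (hsb : Ls.Sublist Lb)
    (bs : List (List V)) (hbs : ∀ L ∈ bs, L = La ∨ L = Lb ∨ L = Ls)
    (hadj : bs.Chain' fun X Y => ¬(X = La ∧ Y = Lb) ∧ ¬(X = Lb ∧ Y = La))
    (hwrap : ¬(bs.getLast? = some La ∧ bs.head? = some Lb) ∧
      ¬(bs.getLast? = some Lb ∧ bs.head? = some La))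
    (haMem : La ∈ bs) (hbMem : Lb ∈ bs)
    (fa fb f : ℕ → V)
    (hfa : (∀ i, fa (i + La.length) = fa i) ∧ ∀ i, i < La.length → fa i = La.getD i t)
    (hfb : (∀ i, fb (i + Lb.length) = fb i) ∧ ∀ i, i < Lb.length → fb i = Lb.getD i t)
    (hfc : (∀ i, f (i + bs.flatten.length) = f i) ∧
      ∀ i, i < bs.flatten.length → f i = bs.flatten.getD i t)
    (Ra Rb : ℝ)
    (hRa : IsGreatest (revCosts c N La.length fa) Ra)
    (hRb : IsGreatest (revCosts c N Lb.length fb) Rb) :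
    IsGreatest (revCosts c N bs.flatten.length f) (max Ra Rb) :=
  concat_three_walks_revisit_time_general c N hnonneg htri t ht La Lb Ls haHead hbHead hsHead haOnce
    hbOnce hsOnce haCov hbCov hsCov hsa hsb bs hbs hadj hwrap haMem hbMem fa fb f hfa hfb hfc Ra Rb
    hRa hRb
end
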